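/- arXiv:2401.14679 — 6 statements merged into one kernel-verified Lean document; each statement's English description precedes it below -/
import Mathlib

section
/- Assume μ ≠ 0 and define u_ε(x) := u₀(x) − (μ/|μ|)·ε·ρ(x). Then there exists ε₀ > 0 such that for every ε ∈ (0, ε₀], the C^∞ function u_ε is a strict subsolution of the stationary equation: H(x, u_ε'(x), u_ε(x)) < 0 for every x ∈ ℝ. -/
open Real Set Filter NNReal ENNReal

set_option maxHeartbeats 1000000 in
theorem stmt_2
    (H : ℝ → ℝ → ℝ → ℝ)
    (hH_smooth : ContDiff ℝ (⊤ : ℕ∞) (fun q : ℝ × ℝ × ℝ => H q.1 q.2.1 q.2.2))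
    (hH_per : ∀ x p u, H (x + 1) p u = H x p u)
    (hH1 : ∀ x p u, 0 < iteratedDeriv 2 (fun p' => H x p' u) p)
    (hH2 : ∀ x u, Filter.Tendsto (fun p : ℝ => H x p u / |p|) (Filter.cocompact ℝ) Filter.atTop)
    (κ : ℝ) (hκ : 0 < κ)
    (hH3 : ∀ x p u, |deriv (fun u' => H x p u') u| ≤ κ)
    (u₀ : ℝ → ℝ) (hu₀_smooth : ContDiff ℝ (⊤ : ℕ∞) u₀)
    (hu₀_per : ∀ x, u₀ (x + 1) = u₀ x)
    (hu₀_sol : ∀ x, H x (deriv u₀ x) (u₀ x) = 0)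
    (B : ℝ → ℝ)
    (hB : ∀ x, B x = deriv (fun p => H x p (u₀ x)) (deriv u₀ x))
    (hA : ∀ x, B x ≠ 0)
    (μ : ℝ)
    (hμ : μ = (∫ τ in (0:ℝ)..1, deriv (fun u' => H τ (deriv u₀ τ) u') (u₀ τ) / B τ) /
        (∫ τ in (0:ℝ)..1, 1 / B τ))
    (ρ : ℝ → ℝ)
    (hρ : ∀ x, ρ x = Real.exp (∫ τ in (0:ℝ)..x,
        (μ - deriv (fun u' => H τ (deriv u₀ τ) u') (u₀ τ)) / B τ))
    (hμ_ne : μ ≠ 0)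
    :
    ∃ ε₀ > (0:ℝ), ∀ ε ∈ Set.Ioc (0:ℝ) ε₀,
      ContDiff ℝ (⊤ : ℕ∞) (fun y => u₀ y - μ / |μ| * ε * ρ y) ∧
      ∀ x : ℝ, H x (deriv (fun y => u₀ y - μ / |μ| * ε * ρ y) x)
        (u₀ x - μ / |μ| * ε * ρ x) < 0 := by
  classical
  set Hf : ℝ × ℝ × ℝ → ℝ := fun q => H q.1 q.2.1 q.2.2 with hHfdef
  have hHdiff : Differentiable ℝ Hf := hH_smooth.differentiable (by simp)
  -- directional derivatives
  have hDu : ∀ x p u : ℝ, HasDerivAt (fun u' => H x p u')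
      (fderiv ℝ Hf (x, p, u) (0, 0, 1)) u := by
    intro x p u
    have hγ : HasDerivAt (fun u' : ℝ => ((x, p, u') : ℝ × ℝ × ℝ))
        ((0 : ℝ), (0 : ℝ), (1 : ℝ)) u :=
      (hasDerivAt_const u x).prodMk ((hasDerivAt_const u p).prodMk (hasDerivAt_id u))
    exact (hHdiff (x, p, u)).hasFDerivAt.comp_hasDerivAt u hγ
  have hDp : ∀ x p u : ℝ, HasDerivAt (fun p' => H x p' u)
      (fderiv ℝ Hf (x, p, u) (0, 1, 0)) p := by
    intro x p u
    have hγ : HasDerivAt (fun p' : ℝ => ((x, p', u) : ℝ × ℝ × ℝ))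
        ((0 : ℝ), (1 : ℝ), (0 : ℝ)) p :=
      (hasDerivAt_const p x).prodMk ((hasDerivAt_id p).prodMk (hasDerivAt_const p u))
    exact (hHdiff (x, p, u)).hasFDerivAt.comp_hasDerivAt p hγ
  set hufun : ℝ → ℝ := fun x => fderiv ℝ Hf (x, deriv u₀ x, u₀ x) (0, 0, 1) with hhufun
  have huEq : ∀ x, deriv (fun u' => H x (deriv u₀ x) u') (u₀ x) = hufun x :=
    fun x => (hDu x (deriv u₀ x) (u₀ x)).deriv
  have hB' : ∀ x, B x = fderiv ℝ Hf (x, deriv u₀ x, u₀ x) (0, 1, 0) :=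
    fun x => by rw [hB x, (hDp x (deriv u₀ x) (u₀ x)).deriv]
  -- smoothness
  have hw : ContDiff ℝ (⊤ : ℕ∞) (deriv u₀) := (contDiff_infty_iff_deriv.mp hu₀_smooth).2
  have hP0sm : ContDiff ℝ (⊤ : ℕ∞) (fun x : ℝ => ((x, deriv u₀ x, u₀ x) : ℝ × ℝ × ℝ)) :=
    contDiff_id.prodMk (hw.prodMk hu₀_smooth)
  have hfd : ContDiff ℝ (⊤ : ℕ∞) (fderiv ℝ Hf) := hH_smooth.fderiv_right (m := ((⊤ : ℕ∞) : WithTop ℕ∞)) (by rw [← WithTop.coe_one, ← WithTop.coe_add, top_add])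
  have hhusm : ContDiff ℝ (⊤ : ℕ∞) hufun := (hfd.comp hP0sm).clm_apply contDiff_const
  have hBsm : ContDiff ℝ (⊤ : ℕ∞) B := by
    have : B = fun x => fderiv ℝ Hf (x, deriv u₀ x, u₀ x) (0, 1, 0) := funext hB'
    rw [this]
    exact (hfd.comp hP0sm).clm_apply contDiff_const
  set g : ℝ → ℝ := fun x => (μ - hufun x) / B x with hgdef
  have hgsm : ContDiff ℝ (⊤ : ℕ∞) g := (contDiff_const.sub hhusm).div hBsm hA
  have hgcont : Continuous g := hgsm.continuous
  set G : ℝ → ℝ := fun x => ∫ τ in (0:ℝ)..x, g τ with hGdef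
  have hGd : ∀ x, HasDerivAt G (g x) x :=
    fun x => (hgcont.integral_hasStrictDerivAt 0 x).hasDerivAt
  have hGsm : ContDiff ℝ (⊤ : ℕ∞) G := by
    rw [contDiff_infty_iff_deriv]
    refine ⟨fun x => (hGd x).differentiableAt, ?_⟩
    rw [show deriv G = g from funext fun x => (hGd x).deriv]
    exact hgsm
  have hρEq : ρ = fun x => Real.exp (G x) := by
    funext x
    rw [hρ x]
    congr 1
    apply intervalIntegral.integral_congr
    intro τ _
    show (μ - deriv (fun u' => H τ (deriv u₀ τ) u') (u₀ τ)) / B τ = g τ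
    rw [huEq τ]
  have hρsm : ContDiff ℝ (⊤ : ℕ∞) ρ := by
    rw [hρEq]; exact Real.contDiff_exp.comp hGsm
  have hρd : ∀ x, HasDerivAt ρ (g x * ρ x) x := by
    intro x
    rw [hρEq]
    have := (hGd x).exp
    simpa [mul_comm] using this
  have hρpos : ∀ x, 0 < ρ x := by
    intro x; rw [hρEq]; exact Real.exp_pos _
  -- periodicity
  have hu₀diff : Differentiable ℝ u₀ := hu₀_smooth.differentiable (by simp)
  have hwp : ∀ x, deriv u₀ (x + 1) = deriv u₀ x := by
    intro x
    have h1 : HasDerivAt u₀ (deriv u₀ (x + 1)) (x + 1) := (hu₀diff (x + 1)).hasDerivAt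
    have h2 : HasDerivAt (fun y => u₀ (y + 1)) (deriv u₀ (x + 1) * 1) x :=
      h1.comp x ((hasDerivAt_id x).add_const 1)
    have h3 : (fun y => u₀ (y + 1)) = u₀ := funext fun y => hu₀_per y
    rw [h3, mul_one] at h2
    exact (h2.deriv).symm ▸ rfl
  have hhup : ∀ x, hufun (x + 1) = hufun x := by
    intro x
    have h1 : hufun (x + 1) = deriv (fun u' => H (x + 1) (deriv u₀ (x + 1)) u') (u₀ (x + 1)) :=
      (huEq (x + 1)).symm
    rw [h1, hwp x, hu₀_per x]
    have h2 : (fun u' => H (x + 1) (deriv u₀ x) u') = fun u' => H x (deriv u₀ x) u' :=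
      funext fun u' => hH_per x _ u'
    rw [h2, huEq x]
  have hBp : ∀ x, B (x + 1) = B x := by
    intro x
    rw [hB (x + 1), hB x, hwp x, hu₀_per x]
    have h2 : (fun p => H (x + 1) p (u₀ x)) = fun p => H x p (u₀ x) :=
      funext fun p => hH_per x p _
    rw [h2]
  have hgp : ∀ x, g (x + 1) = g x := by
    intro x
    show (μ - hufun (x + 1)) / B (x + 1) = (μ - hufun x) / B x
    rw [hhup x, hBp x]
  -- sign of B and the μ-identity
  have hBcont : Continuous B := hBsm.continuous
  have hBsign : (∀ x : ℝ, 0 < B x) ∨ (∀ x : ℝ, B x < 0) := by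
    by_contra hcon
    push_neg at hcon
    obtain ⟨⟨x1, hx1⟩, x2, hx2⟩ := hcon
    have hx1' : B x1 < 0 := lt_of_le_of_ne hx1 (hA x1)
    have hx2' : 0 < B x2 := lt_of_le_of_ne hx2 (Ne.symm (hA x2))
    have h0 : (0 : ℝ) ∈ Set.uIcc (B x1) (B x2) :=
      Set.mem_uIcc.mpr (Or.inl ⟨hx1'.le, hx2'.le⟩)
    obtain ⟨z, _, hz⟩ := intermediate_value_uIcc (hBcont.continuousOn (s := Set.uIcc x1 x2)) h0
    exact hA z hz
  have hIB : (∫ τ in (0:ℝ)..1, 1 / B τ) ≠ 0 := by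
    have hBne : Continuous fun τ => 1 / B τ := continuous_const.div hBcont hA
    rcases hBsign with hpos | hneg
    · have := intervalIntegral.intervalIntegral_pos_of_pos (f := fun τ => 1 / B τ)
        (hBne.intervalIntegrable 0 1) (fun τ => one_div_pos.mpr (hpos τ)) one_pos
      exact this.ne'
    · have := intervalIntegral.intervalIntegral_pos_of_pos (f := fun τ => -(1 / B τ))
        ((hBne.neg).intervalIntegrable 0 1)
        (fun τ => by
          have := hneg τ
          simp only [one_div, neg_pos]
          exact inv_lt_zero.mpr this) one_pos
      rw [intervalIntegral.integral_neg] at this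
      intro hzero
      rw [hzero] at this
      simp at this
  have hμI : μ * (∫ τ in (0:ℝ)..1, 1 / B τ) = ∫ τ in (0:ℝ)..1, hufun τ / B τ := by
    have h1 : (∫ τ in (0:ℝ)..1, deriv (fun u' => H τ (deriv u₀ τ) u') (u₀ τ) / B τ)
        = ∫ τ in (0:ℝ)..1, hufun τ / B τ := by
      apply intervalIntegral.integral_congr
      intro τ _
      show deriv (fun u' => H τ (deriv u₀ τ) u') (u₀ τ) / B τ = hufun τ / B τ
      rw [huEq τ]
    rw [hμ, h1]
    exact div_mul_cancel₀ _ hIB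
  have hg01 : (∫ τ in (0:ℝ)..1, g τ) = 0 := by
    have hcont1 : Continuous fun τ => μ * (1 / B τ) :=
      continuous_const.mul (continuous_const.div hBcont hA)
    have hcont2 : Continuous fun τ => hufun τ / B τ :=
      (hhusm.continuous).div hBcont hA
    have h1 : (∫ τ in (0:ℝ)..1, g τ)
        = ∫ τ in (0:ℝ)..1, (μ * (1 / B τ) - hufun τ / B τ) := by
      apply intervalIntegral.integral_congr
      intro τ _
      show (μ - hufun τ) / B τ = μ * (1 / B τ) - hufun τ / B τ
      ring
    rw [h1, intervalIntegral.integral_sub (hcont1.intervalIntegrable 0 1)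
      (hcont2.intervalIntegrable 0 1)]
    rw [intervalIntegral.integral_const_mul, hμI]
    ring
  have hGp : ∀ x, G (x + 1) = G x := by
    intro x
    have hgint : ∀ a b : ℝ, IntervalIntegrable g MeasureTheory.volume a b :=
      fun a b => hgcont.intervalIntegrable a b
    have hper : Function.Periodic g 1 := hgp
    have h2 : (∫ τ in x..x + 1, g τ) = ∫ τ in (0:ℝ)..0 + 1, g τ :=
      hper.intervalIntegral_add_eq x 0
    have h3 : G (x + 1) = G x + ∫ τ in x..x + 1, g τ := by
      show (∫ τ in (0:ℝ)..x + 1, g τ) = (∫ τ in (0:ℝ)..x, g τ) + ∫ τ in x..x + 1, g τ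
      rw [intervalIntegral.integral_add_adjacent_intervals (hgint 0 x) (hgint x (x + 1))]
    rw [h3, h2, zero_add, hg01, add_zero]
  have hρp : ∀ x, ρ (x + 1) = ρ x := by
    intro x
    rw [hρEq]
    simp only
    rw [hGp x]
  -- constants
  have habsμ : (0:ℝ) < |μ| := abs_pos.mpr hμ_ne
  have hcμ : μ / |μ| * μ = |μ| := by
    rw [div_mul_eq_mul_div, eq_comm, eq_div_iff habsμ.ne']
    exact abs_mul_abs_self μ
  -- key identity
  have hkey : ∀ x, B x * (g x * ρ x) + hufun x * ρ x = μ * ρ x := by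
    intro x
    have hBx := hA x
    show B x * ((μ - hufun x) / B x * ρ x) + hufun x * ρ x = μ * ρ x
    field_simp
    ring
  -- the deformation and its ε-derivative
  set P : ℝ → ℝ → ℝ × ℝ × ℝ := fun e x =>
    (x, deriv u₀ x - μ / |μ| * e * (g x * ρ x), u₀ x - μ / |μ| * e * ρ x) with hPdef
  set Af : ℝ → ℝ → ℝ := fun e x =>
    fderiv ℝ Hf (P e x) (0, -(μ / |μ| * (g x * ρ x)), -(μ / |μ| * ρ x)) with hAfdef
  have hFd : ∀ e x, HasDerivAt (fun e' => Hf (P e' x)) (Af e x) e := by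
    intro e x
    have hlin : ∀ k : ℝ, HasDerivAt (fun e' : ℝ => μ / |μ| * e' * k) (μ / |μ| * k) e := by
      intro k
      have h := (hasDerivAt_id e).const_mul (μ / |μ| * k)
      have hfun : (fun e' : ℝ => μ / |μ| * e' * k) = fun e' : ℝ => μ / |μ| * k * e' := by
        funext e'; ring
      rw [hfun]
      simpa using h
    have hγ : HasDerivAt (fun e' : ℝ => P e' x)
        ((0 : ℝ), -(μ / |μ| * (g x * ρ x)), -(μ / |μ| * ρ x)) e := by
      refine (hasDerivAt_const e x).prodMk (HasDerivAt.prodMk ?_ ?_)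
      · have h := (hasDerivAt_const e (deriv u₀ x)).sub (hlin (g x * ρ x))
        rw [zero_sub] at h; exact h
      · have h := (hasDerivAt_const e (u₀ x)).sub (hlin (ρ x))
        rw [zero_sub] at h; exact h
    exact (hHdiff (P e x)).hasFDerivAt.comp_hasDerivAt e hγ
  -- continuity
  have hρcont : Continuous ρ := hρsm.continuous
  have hwcont : Continuous (deriv u₀) := hw.continuous
  have hu₀cont : Continuous u₀ := hu₀_smooth.continuous
  have hPcont : Continuous fun q : ℝ × ℝ => P q.1 q.2 := by
    apply Continuous.prodMk continuous_snd
    apply Continuous.prodMk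
    · exact (hwcont.comp continuous_snd).sub
        ((continuous_const.mul continuous_fst).mul
          ((hgcont.comp continuous_snd).mul (hρcont.comp continuous_snd)))
    · exact (hu₀cont.comp continuous_snd).sub
        ((continuous_const.mul continuous_fst).mul (hρcont.comp continuous_snd))
  have hvcont : Continuous fun q : ℝ × ℝ =>
      (((0:ℝ), -(μ / |μ| * (g q.2 * ρ q.2)), -(μ / |μ| * ρ q.2)) : ℝ × ℝ × ℝ) := by
    apply Continuous.prodMk continuous_const
    apply Continuous.prodMk
    · exact (continuous_const.mul ((hgcont.comp continuous_snd).mul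
        (hρcont.comp continuous_snd))).neg
    · exact (continuous_const.mul (hρcont.comp continuous_snd)).neg
  have hAcont : Continuous fun q : ℝ × ℝ => Af q.1 q.2 :=
    ((hfd.continuous.comp hPcont).clm_apply hvcont)
  set Φ : ℝ → ℝ → ℝ := fun e x => ∫ t in (0:ℝ)..1, Af (t * e) x with hΦdef
  have hΦcont : Continuous fun q : ℝ × ℝ => Φ q.1 q.2 := by
    apply intervalIntegral.continuous_parametric_intervalIntegral_of_continuous
      (f := fun (q : ℝ × ℝ) t => Af (t * q.1) q.2) (μ := MeasureTheory.volume)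
      (s := fun _ => (1:ℝ))
    · exact hAcont.comp ((continuous_snd.mul (continuous_fst.fst)).prodMk continuous_fst.snd)
    · exact continuous_const
  have hP0val : ∀ x, P 0 x = (x, deriv u₀ x, u₀ x) := by
    intro x
    show (x, deriv u₀ x - μ / |μ| * 0 * (g x * ρ x), u₀ x - μ / |μ| * 0 * ρ x)
      = (x, deriv u₀ x, u₀ x)
    simp
  have hHf0 : ∀ x : ℝ, Hf (P 0 x) = 0 := by
    intro x
    rw [hP0val x]
    exact hu₀_sol x
  have hFeq : ∀ e x, Hf (P e x) = e * Φ e x := by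
    intro e x
    rcases eq_or_ne e 0 with rfl | he
    · rw [hHf0 x, zero_mul]
    · have hAfcont : Continuous fun s => Af s x :=
        hAcont.comp (continuous_id.prodMk continuous_const)
      have hFTC : (∫ s in (0:ℝ)..e, Af s x) = Hf (P e x) - Hf (P 0 x) :=
        intervalIntegral.integral_eq_sub_of_hasDerivAt (fun t _ => hFd t x)
          (hAfcont.intervalIntegrable 0 e)
      have hsub : Φ e x = e⁻¹ • ∫ s in (0:ℝ) * e..(1:ℝ) * e, Af s x :=
        intervalIntegral.integral_comp_mul_right (fun s => Af s x) he
      rw [hsub]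
      rw [zero_mul, one_mul, hFTC, hHf0 x, sub_zero, smul_eq_mul]
      field_simp
  have hΦ0 : ∀ x, Φ 0 x = -(|μ| * ρ x) := by
    intro x
    have h1 : Φ 0 x = ∫ t in (0:ℝ)..1, Af 0 x := by
      apply intervalIntegral.integral_congr
      intro t _
      show Af (t * 0) x = Af 0 x
      rw [mul_zero]
    rw [h1, intervalIntegral.integral_const]
    have hv : (((0:ℝ), -(μ / |μ| * (g x * ρ x)), -(μ / |μ| * ρ x)) : ℝ × ℝ × ℝ)
        = (-(μ / |μ| * (g x * ρ x))) • (((0:ℝ),(1:ℝ),(0:ℝ)) : ℝ × ℝ × ℝ)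
          + (-(μ / |μ| * ρ x)) • (((0:ℝ),(0:ℝ),(1:ℝ)) : ℝ × ℝ × ℝ) := by
      simp [Prod.ext_iff]
    have h2 : Af 0 x = -(μ / |μ| * (g x * ρ x)) * B x + -(μ / |μ| * ρ x) * hufun x := by
      show fderiv ℝ Hf (P 0 x) _ = _
      rw [hP0val x, hv, map_add, map_smul, map_smul, smul_eq_mul, smul_eq_mul,
        ← hB' x]
    rw [h2]
    have := hkey x
    have hexp : -(μ / |μ| * (g x * ρ x)) * B x + -(μ / |μ| * ρ x) * hufun x
        = -(μ / |μ|) * (B x * (g x * ρ x) + hufun x * ρ x) := by ring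
    rw [hexp, hkey x]
    rw [show ((1:ℝ) - 0) = 1 by norm_num, one_smul]
    calc -(μ / |μ|) * (μ * ρ x) = -((μ / |μ| * μ) * ρ x) := by ring
      _ = -(|μ| * ρ x) := by rw [hcμ]
  have hΦ0neg : ∀ x, Φ 0 x < 0 := by
    intro x
    rw [hΦ0 x]
    have := mul_pos habsμ (hρpos x)
    linarith
  -- periodicity of Af and Φ in x
  have hfdper : ∀ a p u : ℝ, fderiv ℝ Hf (a + 1, p, u) = fderiv ℝ Hf (a, p, u) := by
    intro a p u
    have h1 : HasFDerivAt (fun q : ℝ × ℝ × ℝ => Hf (q + ((1:ℝ), (0:ℝ), (0:ℝ))))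
        ((fderiv ℝ Hf (((a, p, u) : ℝ × ℝ × ℝ) + ((1:ℝ), (0:ℝ), (0:ℝ)))).comp
          (ContinuousLinearMap.id ℝ (ℝ × ℝ × ℝ))) (a, p, u) :=
      by have h := (hHdiff (((a, p, u) : ℝ × ℝ × ℝ) + ((1:ℝ), (0:ℝ), (0:ℝ)))).hasFDerivAt.comp (a, p, u)
          ((hasFDerivAt_id ((a, p, u) : ℝ × ℝ × ℝ)).add_const ((1:ℝ), (0:ℝ), (0:ℝ))); exact h
    rw [ContinuousLinearMap.comp_id] at h1
    have h2 : (fun q : ℝ × ℝ × ℝ => Hf (q + ((1:ℝ), (0:ℝ), (0:ℝ)))) = Hf := by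
      funext q
      show H (q.1 + 1) (q.2.1 + 0) (q.2.2 + 0) = H q.1 q.2.1 q.2.2
      rw [add_zero, add_zero, hH_per]
    rw [h2] at h1
    have h3 : (((a, p, u) : ℝ × ℝ × ℝ) + ((1:ℝ), (0:ℝ), (0:ℝ))) = ((a + 1, p, u) : ℝ × ℝ × ℝ) := by
      simp [Prod.ext_iff]
    rw [h3] at h1
    exact h1.fderiv.symm ▸ rfl
  have hAfper : ∀ e x, Af e (x + 1) = Af e x := by
    intro e x
    show fderiv ℝ Hf (P e (x + 1)) (0, -(μ / |μ| * (g (x+1) * ρ (x+1))), -(μ / |μ| * ρ (x+1)))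
      = fderiv ℝ Hf (P e x) (0, -(μ / |μ| * (g x * ρ x)), -(μ / |μ| * ρ x))
    have hPe : P e (x + 1) = (x + 1, deriv u₀ x - μ / |μ| * e * (g x * ρ x),
        u₀ x - μ / |μ| * e * ρ x) := by
      show ((x + 1, deriv u₀ (x+1) - μ / |μ| * e * (g (x+1) * ρ (x+1)),
        u₀ (x+1) - μ / |μ| * e * ρ (x+1)) : ℝ × ℝ × ℝ) = _
      rw [hwp x, hgp x, hρp x, hu₀_per x]
    rw [hPe, hgp x, hρp x, hfdper x _ _]
  have hΦper : ∀ e x, Φ e (x + 1) = Φ e x := by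
    intro e x
    apply intervalIntegral.integral_congr
    intro t _
    exact hAfper (t * e) x
  -- tube lemma
  have hev : ∀ᶠ e in nhds (0:ℝ), ∀ y ∈ Set.Icc (0:ℝ) 1, Φ e y < 0 := by
    apply isCompact_Icc.eventually_forall_of_forall_eventually
    intro y _
    have hopen : IsOpen {q : ℝ × ℝ | Φ q.1 q.2 < 0} := isOpen_lt hΦcont continuous_const
    have hmem : ((0:ℝ), y) ∈ {q : ℝ × ℝ | Φ q.1 q.2 < 0} := hΦ0neg y
    exact hopen.eventually_mem hmem
  obtain ⟨δ, hδ0, hδ⟩ := Metric.eventually_nhds_iff.mp hev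
  refine ⟨δ / 2, by positivity, ?_⟩
  rintro ε ⟨hε0, hε1⟩
  constructor
  · exact hu₀_smooth.sub (contDiff_const.mul hρsm)
  · intro x
    have hud : HasDerivAt (fun y => u₀ y - μ / |μ| * ε * ρ y)
        (deriv u₀ x - μ / |μ| * ε * (g x * ρ x)) x := by
      have h1 : HasDerivAt u₀ (deriv u₀ x) x := (hu₀diff x).hasDerivAt
      have h2 : HasDerivAt (fun y => μ / |μ| * ε * ρ y) (μ / |μ| * ε * (g x * ρ x)) x :=
        (hρd x).const_mul (μ / |μ| * ε)
      exact h1.sub h2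
    rw [hud.deriv]
    have hHP : H x (deriv u₀ x - μ / |μ| * ε * (g x * ρ x)) (u₀ x - μ / |μ| * ε * ρ x)
        = Hf (P ε x) := rfl
    rw [hHP, hFeq ε x]
    -- reduce to the fundamental domain
    have hΦp : Function.Periodic (Φ ε) 1 := fun y => hΦper ε y
    have hfrmem : Int.fract x ∈ Set.Icc (0:ℝ) 1 :=
      ⟨Int.fract_nonneg x, (Int.fract_lt_one x).le⟩
    have hΦx : Φ ε x = Φ ε (Int.fract x) := by
      have h := hΦp.sub_int_mul_eq (x := x) ⌊x⌋
      rw [mul_one] at h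
      exact h.symm
    have hdist : dist ε 0 < δ := by
      rw [Real.dist_eq, sub_zero, abs_of_pos hε0]
      linarith
    have hneg : Φ ε (Int.fract x) < 0 := hδ hdist _ hfrmem
    rw [hΦx] at *
    calc ε * Φ ε (Int.fract x) < 0 := mul_neg_of_pos_of_neg hε0 hneg
end

section
/- Assume μ ≠ 0 and define u_ε(x) := u₀(x) − (μ/|μ|)·ε·ρ(x). Then there exists ε₀ > 0 such that for every ε ∈ [−ε₀, 0), the C^∞ function u_ε is a strict supersolution of the stationary equation: H(x, u_ε'(x), u_ε(x)) > 0 for every x ∈ ℝ. -/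
open Real Set Filter FormalMultilinearSeries ENNReal NNReal

lemma aux_line (F : ℝ × ℝ × ℝ → ℝ) (hF : Differentiable ℝ F) (x p u a b c t : ℝ) :
    HasDerivAt (fun s : ℝ => F (x + s * a, p + s * b, u + s * c))
      (fderiv ℝ F (x + t * a, p + t * b, u + t * c) (a, b, c)) t := by
  have hL : HasDerivAt (fun s : ℝ => ((x + s * a, p + s * b, u + s * c) : ℝ × ℝ × ℝ))
      ((a, b, c) : ℝ × ℝ × ℝ) t := by
    have h1 : HasDerivAt (fun s : ℝ => x + s * a) a t := by
      simpa using ((hasDerivAt_id t).mul_const a).const_add x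
    have h2 : HasDerivAt (fun s : ℝ => p + s * b) b t := by
      simpa using ((hasDerivAt_id t).mul_const b).const_add p
    have h3 : HasDerivAt (fun s : ℝ => u + s * c) c t := by
      simpa using ((hasDerivAt_id t).mul_const c).const_add u
    exact h1.prodMk (h2.prodMk h3)
  exact ((hF _).hasFDerivAt).comp_hasDerivAt t hL

lemma aux_keyU (F : ℝ × ℝ × ℝ → ℝ) (hF : Differentiable ℝ F) (x p u : ℝ) :
    HasDerivAt (fun u' : ℝ => F (x, p, u')) (fderiv ℝ F (x, p, u) ((0 : ℝ), (0 : ℝ), (1 : ℝ))) u := by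
  have hL : HasDerivAt (fun s : ℝ => ((x, p, s) : ℝ × ℝ × ℝ)) (((0 : ℝ), (0 : ℝ), (1 : ℝ)) : ℝ × ℝ × ℝ) u :=
    (hasDerivAt_const u x).prodMk ((hasDerivAt_const u p).prodMk (hasDerivAt_id u))
  exact ((hF _).hasFDerivAt).comp_hasDerivAt u hL

lemma aux_keyP (F : ℝ × ℝ × ℝ → ℝ) (hF : Differentiable ℝ F) (x p u : ℝ) :
    HasDerivAt (fun p' : ℝ => F (x, p', u)) (fderiv ℝ F (x, p, u) ((0 : ℝ), (1 : ℝ), (0 : ℝ))) p := by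
  have hL : HasDerivAt (fun s : ℝ => ((x, s, u) : ℝ × ℝ × ℝ)) (((0 : ℝ), (1 : ℝ), (0 : ℝ)) : ℝ × ℝ × ℝ) p :=
    (hasDerivAt_const p x).prodMk ((hasDerivAt_id p).prodMk (hasDerivAt_const p u))
  exact ((hF _).hasFDerivAt).comp_hasDerivAt p hL

lemma aux_per (F : ℝ × ℝ × ℝ → ℝ) (hF : Differentiable ℝ F)
    (hper : ∀ x p u, F (x + 1, p, u) = F (x, p, u)) (x p u a b : ℝ) :
    fderiv ℝ F (x + 1, p, u) ((0 : ℝ), a, b) = fderiv ℝ F (x, p, u) ((0 : ℝ), a, b) := by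
  have h1 := aux_line F hF (x + 1) p u 0 a b 0
  have h2 := aux_line F hF x p u 0 a b 0
  have hfun : (fun s : ℝ => F (x + 1 + s * 0, p + s * a, u + s * b)) =
      (fun s : ℝ => F (x + s * 0, p + s * a, u + s * b)) := by
    funext s
    have : x + 1 + s * 0 = (x + s * 0) + 1 := by ring
    rw [this, hper]
  rw [hfun] at h1
  have := h1.unique h2
  simpa using this

theorem stmt_3
    (H : ℝ → ℝ → ℝ → ℝ)
    (hH_smooth : ContDiff ℝ (⊤ : ℕ∞) (fun q : ℝ × ℝ × ℝ => H q.1 q.2.1 q.2.2))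
    (hH_per : ∀ x p u, H (x + 1) p u = H x p u)
    (hH1 : ∀ x p u, 0 < iteratedDeriv 2 (fun p' => H x p' u) p)
    (hH2 : ∀ x u, Filter.Tendsto (fun p : ℝ => H x p u / |p|) (Filter.cocompact ℝ) Filter.atTop)
    (κ : ℝ) (hκ : 0 < κ)
    (hH3 : ∀ x p u, |deriv (fun u' => H x p u') u| ≤ κ)
    (u₀ : ℝ → ℝ) (hu₀_smooth : ContDiff ℝ (⊤ : ℕ∞) u₀)
    (hu₀_per : ∀ x, u₀ (x + 1) = u₀ x)
    (hu₀_sol : ∀ x, H x (deriv u₀ x) (u₀ x) = 0)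
    (B : ℝ → ℝ)
    (hB : ∀ x, B x = deriv (fun p => H x p (u₀ x)) (deriv u₀ x))
    (hA : ∀ x, B x ≠ 0)
    (μ : ℝ)
    (hμ : μ = (∫ τ in (0:ℝ)..1, deriv (fun u' => H τ (deriv u₀ τ) u') (u₀ τ) / B τ) /
        (∫ τ in (0:ℝ)..1, 1 / B τ))
    (ρ : ℝ → ℝ)
    (hρ : ∀ x, ρ x = Real.exp (∫ τ in (0:ℝ)..x,
        (μ - deriv (fun u' => H τ (deriv u₀ τ) u') (u₀ τ)) / B τ))
    (hμ_ne : μ ≠ 0)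
    :
    ∃ ε₀ > (0:ℝ), ∀ ε ∈ Set.Ico (-ε₀) (0:ℝ),
      ContDiff ℝ (⊤ : ℕ∞) (fun y => u₀ y - μ / |μ| * ε * ρ y) ∧
      ∀ x : ℝ, 0 < H x (deriv (fun y => u₀ y - μ / |μ| * ε * ρ y) x)
        (u₀ x - μ / |μ| * ε * ρ x) := by
  classical
  set F : ℝ × ℝ × ℝ → ℝ := fun q => H q.1 q.2.1 q.2.2 with hFdef
  have hFsm : ContDiff ℝ (⊤ : ℕ∞) F := hH_smooth
  have hFd : Differentiable ℝ F := hFsm.differentiable (by simp)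
  set P : ℝ → ℝ := deriv u₀ with hPdef
  have htop : (⊤ : WithTop ℕ∞) = ⊤ + 1 := by rfl
  have hP_smooth : ContDiff ℝ (⊤ : ℕ∞) P := by
    have h := hu₀_smooth
    exact (contDiff_infty_iff_deriv.mp h).2
  have hu₀_diff : Differentiable ℝ u₀ := hu₀_smooth.differentiable (by simp)
  have hP_per : ∀ x, P (x + 1) = P x := by
    intro x
    have h1 : deriv (fun y => u₀ (y + 1)) x = deriv u₀ (x + 1) := deriv_comp_add_const u₀ 1 x
    have h2 : (fun y => u₀ (y + 1)) = u₀ := funext hu₀_per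
    rw [h2] at h1
    exact h1.symm
  -- partial derivatives
  set Hu : ℝ → ℝ := fun x => fderiv ℝ F (x, P x, u₀ x) ((0:ℝ), (0:ℝ), (1:ℝ)) with hHudef
  have hHu_eq : ∀ x, deriv (fun u' => H x (P x) u') (u₀ x) = Hu x := by
    intro x
    exact (aux_keyU F hFd x (P x) (u₀ x)).deriv
  set Bs : ℝ → ℝ := fun x => fderiv ℝ F (x, P x, u₀ x) ((0:ℝ), (1:ℝ), (0:ℝ)) with hBsdef
  have hB' : B = Bs := by
    funext x
    rw [hB x]
    exact (aux_keyP F hFd x (P x) (u₀ x)).deriv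
  have hfderiv_smooth : ContDiff ℝ (⊤ : ℕ∞) (fderiv ℝ F) := hFsm.fderiv_right (by simp)
  have hcurve : ContDiff ℝ (⊤ : ℕ∞) (fun x : ℝ => ((x, P x, u₀ x) : ℝ × ℝ × ℝ)) :=
    contDiff_id.prodMk (hP_smooth.prodMk hu₀_smooth)
  have hHu_smooth : ContDiff ℝ (⊤ : ℕ∞) Hu := (hfderiv_smooth.comp hcurve).clm_apply contDiff_const
  have hB_smooth : ContDiff ℝ (⊤ : ℕ∞) B := by
    rw [hB']; exact (hfderiv_smooth.comp hcurve).clm_apply contDiff_const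
  set g : ℝ → ℝ := fun x => (μ - Hu x) / B x with hgdef
  have hg_smooth : ContDiff ℝ (⊤ : ℕ∞) g := (contDiff_const.sub hHu_smooth).div hB_smooth hA
  have hg_cont : Continuous g := hg_smooth.continuous
  set I : ℝ → ℝ := fun x => ∫ τ in (0:ℝ)..x, g τ with hIdef
  have hI_deriv : ∀ x, HasDerivAt I (g x) x := by
    intro x
    exact intervalIntegral.integral_hasDerivAt_right (hg_cont.intervalIntegrable _ _)
      hg_cont.aestronglyMeasurable.stronglyMeasurableAtFilter hg_cont.continuousAt
  have hI_smooth : ContDiff ℝ (⊤ : ℕ∞) I := by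
    rw [contDiff_infty_iff_deriv]
    refine ⟨fun x => (hI_deriv x).differentiableAt, ?_⟩
    have hdI : deriv I = g := funext fun x => (hI_deriv x).deriv
    rw [hdI]; exact hg_smooth
  have hρ_eq : ρ = fun x => Real.exp (I x) := by
    funext x
    rw [hρ x]
    congr 1
    apply intervalIntegral.integral_congr
    intro τ _
    simp only [hgdef]
    rw [hHu_eq τ]
  have hρ_smooth : ContDiff ℝ (⊤ : ℕ∞) ρ := by
    rw [hρ_eq]; exact Real.contDiff_exp.comp hI_smooth
  have hρ_pos : ∀ x, 0 < ρ x := by intro x; rw [hρ_eq]; exact Real.exp_pos _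
  have hρ_deriv : ∀ x, HasDerivAt ρ (g x * ρ x) x := by
    intro x
    rw [hρ_eq]
    have := (hI_deriv x).exp
    simpa [mul_comm] using this
  -- periodicity facts
  have hHu_per : ∀ x, Hu (x + 1) = Hu x := by
    intro x
    rw [← hHu_eq (x + 1), ← hHu_eq x]
    simp only [hP_per, hu₀_per, hH_per]
  have hB_per : ∀ x, B (x + 1) = B x := by
    intro x
    rw [hB (x + 1), hB x]
    simp only [hP_per, hu₀_per, hH_per]
  have hg_per : ∀ x, g (x + 1) = g x := by
    intro x
    simp only [hgdef]
    rw [hHu_per, hB_per]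
  have hcontB : Continuous B := hB_smooth.continuous
  have hcont1B : Continuous fun τ => 1 / B τ := continuous_const.div hcontB hA
  have hcontHuB : Continuous fun τ => Hu τ / B τ := hHu_smooth.continuous.div hcontB hA
  have hint_g : (∫ τ in (0:ℝ)..1, g τ) = 0 := by
    have hden : (∫ τ in (0:ℝ)..1, 1 / B τ) ≠ 0 := by
      intro h0
      apply hμ_ne
      rw [hμ, h0]
      exact div_zero _
    have hnum' : (∫ τ in (0:ℝ)..1, Hu τ / B τ) = μ * ∫ τ in (0:ℝ)..1, 1 / B τ := by
      have h1 : (∫ τ in (0:ℝ)..1, Hu τ / B τ)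
          = (∫ τ in (0:ℝ)..1, deriv (fun u' => H τ (P τ) u') (u₀ τ) / B τ) := by
        apply intervalIntegral.integral_congr
        intro τ _
        show Hu τ / B τ = deriv (fun u' => H τ (P τ) u') (u₀ τ) / B τ
        rw [hHu_eq τ]
      rw [h1, hμ]
      field_simp
    have hsplit : (∫ τ in (0:ℝ)..1, g τ)
        = μ * (∫ τ in (0:ℝ)..1, 1 / B τ) - (∫ τ in (0:ℝ)..1, Hu τ / B τ) := by
      have heq : ∀ τ : ℝ, g τ = μ * (1 / B τ) - Hu τ / B τ := by
        intro τ
        simp only [hgdef]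
        rw [_root_.sub_div, mul_one_div]
      rw [intervalIntegral.integral_congr (g := fun τ => μ * (1 / B τ) - Hu τ / B τ)
        (fun τ _ => heq τ)]
      rw [intervalIntegral.integral_sub ((hcont1B.intervalIntegrable _ _).const_mul μ)
        (hcontHuB.intervalIntegrable _ _)]
      rw [intervalIntegral.integral_const_mul]
    rw [hsplit, hnum']
    ring
  have hgP : Function.Periodic g 1 := hg_per
  have hI_per : ∀ x, I (x + 1) = I x := by
    intro x
    have h1 : (∫ τ in (0:ℝ)..x, g τ) + (∫ τ in x..(x+1), g τ) = ∫ τ in (0:ℝ)..(x+1), g τ :=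
      intervalIntegral.integral_add_adjacent_intervals (hg_cont.intervalIntegrable _ _)
        (hg_cont.intervalIntegrable _ _)
    have h2 : (∫ τ in x..(x+1), g τ) = ∫ τ in (0:ℝ)..(0+1:ℝ), g τ :=
      hgP.intervalIntegral_add_eq x 0
    have h3 : (∫ τ in (0:ℝ)..(0+1:ℝ), g τ) = 0 := by rw [zero_add]; exact hint_g
    simp only [hIdef]
    rw [← h1, h2, h3, add_zero]
  have hρx : ∀ y, ρ y = Real.exp (I y) := fun y => by rw [hρ_eq]
  have hρ_per : ∀ x, ρ (x + 1) = ρ x := by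
    intro x
    rw [hρx, hρx, hI_per]
  set Q : ℝ → ℝ := fun x => g x * ρ x with hQdef
  have hQ_per : ∀ x, Q (x + 1) = Q x := by
    intro x
    simp only [hQdef]
    rw [hg_per, hρ_per]
  set sg : ℝ := μ / |μ| with hsdef
  have habs : |μ| ≠ 0 := abs_ne_zero.mpr hμ_ne
  have hsμ : sg * μ = |μ| := by
    rw [hsdef, div_mul_eq_mul_div, ← abs_mul_abs_self μ, mul_div_assoc,
      div_self habs, mul_one]
  set D : ℝ → ℝ → ℝ := fun ε x =>
    fderiv ℝ F (x, P x - sg * ε * Q x, u₀ x - sg * ε * ρ x)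
      ((0:ℝ), -(sg * Q x), -(sg * ρ x)) with hDdef
  have hψ : ∀ (x ε : ℝ),
      HasDerivAt (fun t => H x (P x - sg * t * Q x) (u₀ x - sg * t * ρ x)) (D ε x) ε := by
    intro x ε
    have h := aux_line F hFd x (P x) (u₀ x) 0 (-(sg * Q x)) (-(sg * ρ x)) ε
    have hfun : (fun τ : ℝ => F (x + τ * 0, P x + τ * -(sg * Q x), u₀ x + τ * -(sg * ρ x))) =
        (fun t : ℝ => H x (P x - sg * t * Q x) (u₀ x - sg * t * ρ x)) := by
      funext τ
      show F (x + τ * 0, P x + τ * -(sg * Q x), u₀ x + τ * -(sg * ρ x))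
          = F (x, P x - sg * τ * Q x, u₀ x - sg * τ * ρ x)
      rw [show x + τ * 0 = x by ring, show P x + τ * -(sg * Q x) = P x - sg * τ * Q x by ring,
        show u₀ x + τ * -(sg * ρ x) = u₀ x - sg * τ * ρ x by ring]
    rw [hfun] at h
    have hpt : ((x + ε * 0, P x + ε * -(sg * Q x), u₀ x + ε * -(sg * ρ x)) : ℝ × ℝ × ℝ)
        = (x, P x - sg * ε * Q x, u₀ x - sg * ε * ρ x) := by
      simp only [Prod.mk.injEq]
      refine ⟨by ring, by ring, by ring⟩
    rw [hpt] at h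
    exact h
  have hρ_cont : Continuous ρ := hρ_smooth.continuous
  have hQ_cont : Continuous Q := hg_cont.mul hρ_cont
  have hP_cont : Continuous P := hP_smooth.continuous
  have hu₀_cont : Continuous u₀ := hu₀_smooth.continuous
  have hD_cont : Continuous (fun q : ℝ × ℝ => D q.1 q.2) := by
    simp only [hDdef]
    have hA1 : Continuous (fun q : ℝ × ℝ => P q.2 - sg * q.1 * Q q.2) :=
      (hP_cont.comp continuous_snd).sub
        (((continuous_const.mul continuous_fst)).mul (hQ_cont.comp continuous_snd))
    have hA2 : Continuous (fun q : ℝ × ℝ => u₀ q.2 - sg * q.1 * ρ q.2) :=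
      (hu₀_cont.comp continuous_snd).sub
        (((continuous_const.mul continuous_fst)).mul (hρ_cont.comp continuous_snd))
    have hpoint : Continuous (fun q : ℝ × ℝ =>
        ((q.2, P q.2 - sg * q.1 * Q q.2, u₀ q.2 - sg * q.1 * ρ q.2) : ℝ × ℝ × ℝ)) :=
      continuous_snd.prodMk (hA1.prodMk hA2)
    have hvec : Continuous (fun q : ℝ × ℝ =>
        (((0:ℝ), -(sg * Q q.2), -(sg * ρ q.2)) : ℝ × ℝ × ℝ)) :=
      continuous_const.prodMk
        (((continuous_const.mul (hQ_cont.comp continuous_snd)).neg).prodMk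
          ((continuous_const.mul (hρ_cont.comp continuous_snd)).neg))
    exact (hfderiv_smooth.continuous.comp hpoint).clm_apply hvec
  have hD0 : ∀ x, D 0 x = -(|μ| * ρ x) := by
    intro x
    simp only [hDdef]
    have hx0 : ((x, P x - sg * 0 * Q x, u₀ x - sg * 0 * ρ x) : ℝ × ℝ × ℝ)
        = (x, P x, u₀ x) := by
      simp only [Prod.mk.injEq]
      exact ⟨by simp, by ring, by ring⟩
    rw [hx0]
    have hv : (((0:ℝ), -(sg * Q x), -(sg * ρ x)) : ℝ × ℝ × ℝ)
        = (-(sg * Q x)) • (((0:ℝ), (1:ℝ), (0:ℝ)) : ℝ × ℝ × ℝ)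
          + (-(sg * ρ x)) • (((0:ℝ), (0:ℝ), (1:ℝ)) : ℝ × ℝ × ℝ) := by
      simp only [Prod.smul_mk, smul_eq_mul, Prod.mk_add_mk, Prod.mk.injEq]
      exact ⟨by simp, by ring, by ring⟩
    rw [hv, map_add, (fderiv ℝ F (x, P x, u₀ x)).map_smul,
      (fderiv ℝ F (x, P x, u₀ x)).map_smul]
    have e1 : fderiv ℝ F (x, P x, u₀ x) (((0:ℝ), (1:ℝ), (0:ℝ)) : ℝ × ℝ × ℝ) = B x := by
      rw [hB']
    have e2 : fderiv ℝ F (x, P x, u₀ x) (((0:ℝ), (0:ℝ), (1:ℝ)) : ℝ × ℝ × ℝ) = Hu x := rfl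
    rw [e1, e2]
    have hgB : g x * B x = μ - Hu x := by
      simp only [hgdef]
      exact div_mul_cancel₀ _ (hA x)
    simp only [smul_eq_mul, hQdef]
    calc -(sg * (g x * ρ x)) * B x + -(sg * ρ x) * Hu x
        = -(sg * ρ x) * (g x * B x + Hu x) := by ring
      _ = -(sg * ρ x) * μ := by rw [hgB]; ring
      _ = -((sg * μ) * ρ x) := by ring
      _ = -(|μ| * ρ x) := by rw [hsμ]
  have hD_per : ∀ ε x, D ε (x + 1) = D ε x := by
    intro ε x
    simp only [hDdef]
    rw [hP_per, hQ_per, hρ_per, hu₀_per]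
    exact aux_per F hFd (fun a p u => hH_per a p u) x _ _ _ _
  -- compactness
  have hU_open : IsOpen {q : ℝ × ℝ | D q.1 q.2 < 0} := isOpen_lt hD_cont continuous_const
  have hKcomp : IsCompact (({0} : Set ℝ) ×ˢ (Icc (0:ℝ) 1)) :=
    isCompact_singleton.prod isCompact_Icc
  have hKU : (({0} : Set ℝ) ×ˢ (Icc (0:ℝ) 1)) ⊆ {q : ℝ × ℝ | D q.1 q.2 < 0} := by
    rintro ⟨e, x⟩ ⟨he, hx⟩
    simp only [mem_singleton_iff] at he
    subst he
    show D 0 x < 0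
    rw [hD0 x]
    exact neg_lt_zero.mpr (mul_pos (abs_pos.mpr hμ_ne) (hρ_pos x))
  obtain ⟨δ, hδpos, hδsub⟩ := hKcomp.exists_thickening_subset_open hU_open hKU
  refine ⟨δ / 2, by positivity, ?_⟩
  intro ε hε
  have hεneg : ε < 0 := hε.2
  have hεge : -(δ / 2) ≤ ε := hε.1
  have hDneg : ∀ c ∈ Set.Icc ε 0, ∀ x : ℝ, D c x < 0 := by
    intro c hc x
    have hfr : Int.fract x ∈ Icc (0:ℝ) 1 := ⟨Int.fract_nonneg x, (Int.fract_lt_one x).le⟩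
    have hmem : ((c, Int.fract x) : ℝ × ℝ)
        ∈ Metric.thickening δ (({0} : Set ℝ) ×ˢ (Icc (0:ℝ) 1)) := by
      rw [Metric.mem_thickening_iff]
      refine ⟨((0:ℝ), Int.fract x), Set.mem_prod.mpr ⟨Set.mem_singleton _, hfr⟩, ?_⟩
      rw [Prod.dist_eq]
      have h1 : dist c (0:ℝ) ≤ δ / 2 := by
        rw [Real.dist_eq, sub_zero, abs_le]
        exact ⟨by linarith [hc.1], by linarith [hc.2]⟩
      have h2 : dist (Int.fract x) (Int.fract x) = 0 := dist_self _
      rw [h2]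
      have : max (dist c (0:ℝ)) 0 = dist c 0 := max_eq_left dist_nonneg
      rw [this]
      linarith
    have hneg : D c (Int.fract x) < 0 := hδsub hmem
    have hper : Function.Periodic (fun y => D c y) 1 := fun y => hD_per c y
    have heq : D c (x - (⌊x⌋ : ℝ) * 1) = D c x := hper.sub_int_mul_eq ⌊x⌋
    have hfr_eq : Int.fract x = x - (⌊x⌋ : ℝ) * 1 := by
      rw [mul_one]
      rfl
    rw [hfr_eq, heq] at hneg
    exact hneg
  constructor
  · exact hu₀_smooth.sub (contDiff_const.mul hρ_smooth)
  · intro x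
    have hder : HasDerivAt (fun y => u₀ y - sg * ε * ρ y) (P x - sg * ε * Q x) x := by
      have h1 : HasDerivAt u₀ (P x) x := (hu₀_diff x).hasDerivAt
      have h2 : HasDerivAt (fun y => sg * ε * ρ y) (sg * ε * (g x * ρ x)) x :=
        (hρ_deriv x).const_mul (sg * ε)
      have h3 := h1.sub h2
      have : P x - sg * ε * (g x * ρ x) = P x - sg * ε * Q x := by
        simp only [hQdef]
      rw [this] at h3
      exact h3
    rw [hder.deriv]
    have hψd : ∀ t : ℝ, HasDerivAt
        (fun t => H x (P x - sg * t * Q x) (u₀ x - sg * t * ρ x)) (D t x) t :=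
      fun t => hψ x t
    obtain ⟨c, hcmem, hceq⟩ := exists_hasDerivAt_eq_slope
      (fun t => H x (P x - sg * t * Q x) (u₀ x - sg * t * ρ x)) (fun t => D t x) hεneg
      (fun t _ => (hψd t).continuousAt.continuousWithinAt) (fun t _ => hψd t)
    have hψ0 : H x (P x - sg * 0 * Q x) (u₀ x - sg * 0 * ρ x) = 0 := by
      rw [show P x - sg * 0 * Q x = P x by ring, show u₀ x - sg * 0 * ρ x = u₀ x by ring]
      exact hu₀_sol x
    rw [hψ0] at hceq
    have hDc : D c x < 0 := hDneg c ⟨hcmem.1.le, hcmem.2.le⟩ x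
    have hne : (0:ℝ) - ε ≠ 0 := by linarith
    rw [eq_div_iff hne] at hceq
    have h5 : H x (P x - sg * ε * Q x) (u₀ x - sg * ε * ρ x) = D c x * ε := by
      linear_combination hceq
    rw [h5]
    exact mul_pos_of_neg_of_neg hDc hεneg
end

section
/- Assume μ > 0 and fix Θ ∈ [0, μ). Define w_ε(x,t) := u₀(x) − ε·ρ(x)·e^{−Θt}. Then there exists ε̃₀ > 0 (depending on Θ) such that for every ε ∈ (0, ε̃₀], w_ε is a C^∞ subsolution of the evolutionary equation: ∂_t w_ε(x,t) + H(x, ∂_x w_ε(x,t), w_ε(x,t)) ≤ 0 for every x ∈ ℝ and every t ∈ [0, +∞). -/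
open Real Set Filter FormalMultilinearSeries
open scoped ENNReal NNReal

theorem stmt_4
    (H : ℝ → ℝ → ℝ → ℝ)
    (hH_smooth : ContDiff ℝ (⊤ : ℕ∞) (fun q : ℝ × ℝ × ℝ => H q.1 q.2.1 q.2.2))
    (hH_per : ∀ x p u, H (x + 1) p u = H x p u)
    (hH1 : ∀ x p u, 0 < iteratedDeriv 2 (fun p' => H x p' u) p)
    (hH2 : ∀ x u, Filter.Tendsto (fun p : ℝ => H x p u / |p|) (Filter.cocompact ℝ) Filter.atTop)
    (κ : ℝ) (hκ : 0 < κ)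
    (hH3 : ∀ x p u, |deriv (fun u' => H x p u') u| ≤ κ)
    (u₀ : ℝ → ℝ) (hu₀_smooth : ContDiff ℝ (⊤ : ℕ∞) u₀)
    (hu₀_per : ∀ x, u₀ (x + 1) = u₀ x)
    (hu₀_sol : ∀ x, H x (deriv u₀ x) (u₀ x) = 0)
    (B : ℝ → ℝ)
    (hB : ∀ x, B x = deriv (fun p => H x p (u₀ x)) (deriv u₀ x))
    (hA : ∀ x, B x ≠ 0)
    (μ : ℝ)
    (hμ : μ = (∫ τ in (0:ℝ)..1, deriv (fun u' => H τ (deriv u₀ τ) u') (u₀ τ) / B τ) /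
        (∫ τ in (0:ℝ)..1, 1 / B τ))
    (ρ : ℝ → ℝ)
    (hρ : ∀ x, ρ x = Real.exp (∫ τ in (0:ℝ)..x,
        (μ - deriv (fun u' => H τ (deriv u₀ τ) u') (u₀ τ)) / B τ))
    (hμ_pos : 0 < μ) (Θ : ℝ) (hΘ : Θ ∈ Set.Ico (0:ℝ) μ)
    :
    ∃ ε₀ > (0:ℝ), ∀ ε ∈ Set.Ioc (0:ℝ) ε₀,
      ContDiff ℝ (⊤ : ℕ∞) (fun q : ℝ × ℝ => u₀ q.1 - ε * ρ q.1 * Real.exp (-Θ * q.2)) ∧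
      ∀ x : ℝ, ∀ t ∈ Set.Ici (0:ℝ),
        deriv (fun s => u₀ x - ε * ρ x * Real.exp (-Θ * s)) t +
          H x (deriv (fun y => u₀ y - ε * ρ y * Real.exp (-Θ * t)) x)
            (u₀ x - ε * ρ x * Real.exp (-Θ * t)) ≤ 0 := by
  -- ## Setup: partial derivatives of H
  set F : ℝ × ℝ × ℝ → ℝ := fun q => H q.1 q.2.1 q.2.2 with hF
  have hFdiff : Differentiable ℝ F := hH_smooth.differentiable (by simp)
  set Hu : ℝ × ℝ × ℝ → ℝ := fun q => fderiv ℝ F q (0, 0, 1) with hHu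
  set Hp : ℝ × ℝ × ℝ → ℝ := fun q => fderiv ℝ F q (0, 1, 0) with hHp
  have hfd : ContDiff ℝ (⊤ : ℕ∞) (fderiv ℝ F) := hH_smooth.fderiv_right (by simp)
  have hHu_smooth : ContDiff ℝ (⊤ : ℕ∞) Hu := hfd.clm_apply contDiff_const
  have hHp_smooth : ContDiff ℝ (⊤ : ℕ∞) Hp := hfd.clm_apply contDiff_const
  have hdu : ∀ x p u : ℝ, HasDerivAt (fun u' => H x p u') (Hu (x, p, u)) u := by
    intro x p u
    have hl : HasDerivAt (fun u' : ℝ => ((x, p, u') : ℝ × ℝ × ℝ)) (0, 0, 1) u :=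
      (hasDerivAt_const u x).prodMk ((hasDerivAt_const u p).prodMk (hasDerivAt_id u))
    exact (hFdiff (x, p, u)).hasFDerivAt.comp_hasDerivAt u hl
  have hdp : ∀ x p u : ℝ, HasDerivAt (fun p' => H x p' u) (Hp (x, p, u)) p := by
    intro x p u
    have hl : HasDerivAt (fun p' : ℝ => ((x, p', u) : ℝ × ℝ × ℝ)) (0, 1, 0) p :=
      (hasDerivAt_const p x).prodMk ((hasDerivAt_id p).prodMk (hasDerivAt_const p u))
    exact (hFdiff (x, p, u)).hasFDerivAt.comp_hasDerivAt p hl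
  have hdU : ∀ x p u : ℝ, deriv (fun u' => H x p u') u = Hu (x, p, u) :=
    fun x p u => (hdu x p u).deriv
  have hdP : ∀ x p u : ℝ, deriv (fun p' => H x p' u) p = Hp (x, p, u) :=
    fun x p u => (hdp x p u).deriv
  -- deriv u₀ is smooth
  have hdu₀_smooth : ContDiff ℝ (⊤ : ℕ∞) (deriv u₀) := by
    have h1 : ContDiff ℝ (⊤ : ℕ∞) (fun x => fderiv ℝ u₀ x 1) :=
      (hu₀_smooth.fderiv_right (by simp)).clm_apply contDiff_const
    have h2 : (fun x => fderiv ℝ u₀ x 1) = deriv u₀ := by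
      funext x; rw [fderiv_apply_one_eq_deriv]
    rwa [h2] at h1
  have hu₀d : ∀ x, HasDerivAt u₀ (deriv u₀ x) x :=
    fun x => (hu₀_smooth.differentiable (by simp) x).hasDerivAt
  -- the mixed chain rule we will need twice
  have hmix : ∀ x A C DA DC a : ℝ,
      HasDerivAt (fun a' => H x (A - a' * DA) (C - a' * DC))
        (-(DA * Hp (x, A - a * DA, C - a * DC)) - DC * Hu (x, A - a * DA, C - a * DC)) a := by
    intro x A C DA DC a
    have hl : HasDerivAt (fun a' : ℝ => ((x, A - a' * DA, C - a' * DC) : ℝ × ℝ × ℝ))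
        (0, -DA, -DC) a := by
      have := (hasDerivAt_const a x).prodMk
        ((((hasDerivAt_id a).mul_const DA).const_sub A).prodMk
          (((hasDerivAt_id a).mul_const DC).const_sub C))
      simpa using this
    have h := (hFdiff _).hasFDerivAt.comp_hasDerivAt a hl
    have hv : ((0:ℝ), -DA, -DC)
        = (-DA) • ((0:ℝ), (1:ℝ), (0:ℝ)) + (-DC) • ((0:ℝ), (0:ℝ), (1:ℝ)) := by
      simp [Prod.ext_iff]
    refine h.congr_deriv (Eq.symm ?_)
    rw [hv, map_add, map_smul, map_smul]
    show _ = -DA • Hp (x, A - a * DA, C - a * DC) + -DC • Hu (x, A - a * DA, C - a * DC)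
    simp only [smul_eq_mul]
    ring
  -- ## B, Hu₀, g, G, ρ
  have hB' : ∀ x, B x = Hp (x, deriv u₀ x, u₀ x) := fun x => by rw [hB, hdP]
  have hB_smooth : ContDiff ℝ (⊤ : ℕ∞) B := by
    rw [show B = fun x => Hp (x, deriv u₀ x, u₀ x) from funext hB']
    exact hHp_smooth.comp (contDiff_id.prodMk (hdu₀_smooth.prodMk hu₀_smooth))
  have hHu₀_smooth : ContDiff ℝ (⊤ : ℕ∞) (fun x => Hu (x, deriv u₀ x, u₀ x)) :=
    hHu_smooth.comp (contDiff_id.prodMk (hdu₀_smooth.prodMk hu₀_smooth))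
  set g : ℝ → ℝ := fun x => (μ - Hu (x, deriv u₀ x, u₀ x)) / B x with hgdef
  have hg_smooth : ContDiff ℝ (⊤ : ℕ∞) g := (contDiff_const.sub hHu₀_smooth).div hB_smooth hA
  have hgc : Continuous g := hg_smooth.continuous
  set G : ℝ → ℝ := fun x => ∫ τ in (0:ℝ)..x, g τ with hGdef
  have hρeq : ρ = fun x => Real.exp (G x) := by
    funext x
    rw [hρ]
    congr 1
    apply intervalIntegral.integral_congr
    intro τ _
    show (μ - deriv (fun u' => H τ (deriv u₀ τ) u') (u₀ τ)) / B τ = g τ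
    rw [hdU]
  have hGderiv : ∀ x, HasDerivAt G (g x) x := fun x =>
    intervalIntegral.integral_hasDerivAt_right (hgc.intervalIntegrable _ _)
      (hgc.stronglyMeasurableAtFilter _ _) hgc.continuousAt
  have hG_smooth : ContDiff ℝ (⊤ : ℕ∞) G :=
    contDiff_infty_iff_deriv.mpr ⟨fun x => (hGderiv x).differentiableAt, by
      rw [show deriv G = g from funext fun x => (hGderiv x).deriv]; exact hg_smooth⟩
  have hρ_smooth : ContDiff ℝ (⊤ : ℕ∞) ρ := by
    rw [hρeq]; exact Real.contDiff_exp.comp hG_smooth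
  set Dρ : ℝ → ℝ := fun x => ρ x * g x with hDρdef
  have hρx : ∀ x, ρ x = Real.exp (G x) := fun x => by rw [hρeq]
  have hρd : ∀ x, HasDerivAt ρ (Dρ x) x := by
    intro x
    have h := (hGderiv x).exp
    rw [← hρeq] at h
    have hval : Real.exp (G x) * g x = Dρ x := by rw [← hρx x]
    rwa [hval] at h
  have hρpos : ∀ x, 0 < ρ x := by
    intro x; rw [hρeq]; exact Real.exp_pos _
  have hDρ_smooth : ContDiff ℝ (⊤ : ℕ∞) Dρ := hρ_smooth.mul hg_smooth
  -- ## Periodicity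
  have hdu₀_per : ∀ x, deriv u₀ (x + 1) = deriv u₀ x := by
    intro x
    have h1 : deriv (fun y => u₀ (y + 1)) x = deriv u₀ (x + 1) := deriv_comp_add_const u₀ 1 x
    have h2 : (fun y => u₀ (y + 1)) = u₀ := funext hu₀_per
    rw [← h1, h2]
  have hHu_per : ∀ x p u : ℝ, Hu (x + 1, p, u) = Hu (x, p, u) := by
    intro x p u
    rw [← hdU, ← hdU]
    congr 1
    funext u'
    rw [hH_per]
  have hHp_per : ∀ x p u : ℝ, Hp (x + 1, p, u) = Hp (x, p, u) := by
    intro x p u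
    rw [← hdP, ← hdP]
    congr 1
    funext p'
    rw [hH_per]
  have hB_per : ∀ x, B (x + 1) = B x := by
    intro x; rw [hB' (x + 1), hB' x, hdu₀_per, hu₀_per, hHp_per]
  have hg_per : Function.Periodic g 1 := by
    intro x
    simp only [hgdef]
    rw [hdu₀_per, hu₀_per, hHu_per, hB_per]
  -- the sign of B is constant, so ∫ 1/B ≠ 0
  have hBc : Continuous B := hB_smooth.continuous
  have hBsign : (∀ x, 0 < B x) ∨ (∀ x, B x < 0) := by
    rcases lt_or_gt_of_ne (hA 0) with h0 | h0
    · right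
      intro x
      by_contra hx
      push_neg at hx
      have hx' : 0 < B x := lt_of_le_of_ne hx (Ne.symm (hA x))
      have : (0:ℝ) ∈ Set.uIcc (B 0) (B x) := Set.mem_uIcc.mpr (Or.inl ⟨h0.le, hx'.le⟩)
      obtain ⟨c, _, hc⟩ := intermediate_value_uIcc (hBc.continuousOn) this
      exact hA c hc
    · left
      intro x
      by_contra hx
      push_neg at hx
      have hx' : B x < 0 := lt_of_le_of_ne hx (hA x)
      have : (0:ℝ) ∈ Set.uIcc (B x) (B 0) := Set.mem_uIcc.mpr (Or.inl ⟨hx'.le, h0.le⟩)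
      obtain ⟨c, _, hc⟩ := intermediate_value_uIcc (hBc.continuousOn) this
      exact hA c hc
  have hBinv_cont : Continuous (fun x => 1 / B x) := continuous_const.div hBc hA
  have hIb : (∫ τ in (0:ℝ)..1, 1 / B τ) ≠ 0 := by
    rcases hBsign with hpos | hneg
    · refine ne_of_gt (intervalIntegral.intervalIntegral_pos_of_pos_on
        (hBinv_cont.intervalIntegrable _ _)
        (fun x _ => ?_) one_pos)
      have := hpos x
      positivity
    · have : (0:ℝ) < ∫ τ in (0:ℝ)..1, -(1 / B τ) := by
        refine intervalIntegral.intervalIntegral_pos_of_pos_on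
          ((hBinv_cont.neg).intervalIntegrable _ _) (fun x _ => ?_) one_pos
        have h := one_div_neg.mpr (hneg x)
        linarith
      rw [intervalIntegral.integral_neg] at this
      linarith
  -- μ relation and ∫₀¹ g = 0
  have hμ' : μ = (∫ τ in (0:ℝ)..1, Hu (τ, deriv u₀ τ, u₀ τ) / B τ) /
      (∫ τ in (0:ℝ)..1, 1 / B τ) := by
    rw [hμ]
    congr 1
    apply intervalIntegral.integral_congr
    intro τ _
    show deriv (fun u' => H τ (deriv u₀ τ) u') (u₀ τ) / B τ = Hu (τ, deriv u₀ τ, u₀ τ) / B τ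
    rw [hdU]
  have hHuB_cont : Continuous (fun τ => Hu (τ, deriv u₀ τ, u₀ τ) / B τ) :=
    (hHu₀_smooth.continuous).div hBc hA
  have hg0 : (∫ τ in (0:ℝ)..1, g τ) = 0 := by
    have hsplit : g = fun τ => μ * (1 / B τ) - Hu (τ, deriv u₀ τ, u₀ τ) / B τ := by
      funext τ
      simp only [hgdef]
      ring
    rw [hsplit]
    beta_reduce
    rw [intervalIntegral.integral_sub (f := fun τ => μ * (1 / B τ))
      (g := fun τ => Hu (τ, deriv u₀ τ, u₀ τ) / B τ)
      ((continuous_const.mul hBinv_cont).intervalIntegrable _ _)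
      (hHuB_cont.intervalIntegrable _ _),
      intervalIntegral.integral_const_mul, hμ', div_mul_cancel₀ _ hIb, sub_self]
  have hG_per : ∀ x, G (x + 1) = G x := by
    intro x
    have h1 : G x + (∫ τ in x..(x + 1), g τ) = G (x + 1) :=
      intervalIntegral.integral_add_adjacent_intervals
        (hgc.intervalIntegrable _ _) (hgc.intervalIntegrable _ _)
    have h2 : (∫ τ in x..(x + 1), g τ) = ∫ τ in (0:ℝ)..1, g τ := by
      simpa using hg_per.intervalIntegral_add_eq x 0
    rw [← h1, h2, hg0, add_zero]
  have hρ_per : ∀ x, ρ (x + 1) = ρ x := by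
    intro x; rw [hρeq]; simp only []; rw [hG_per]
  have hDρ_per : ∀ x, Dρ (x + 1) = Dρ x := by
    intro x; simp only [hDρdef]; rw [hρ_per, hg_per]
  -- ## φ and ψ
  set φ : ℝ → ℝ → ℝ := fun x a =>
    Θ * a * ρ x + H x (deriv u₀ x - a * Dρ x) (u₀ x - a * ρ x) with hφdef
  set ψ : ℝ → ℝ → ℝ := fun x a =>
    Θ * ρ x + (-(Dρ x * Hp (x, deriv u₀ x - a * Dρ x, u₀ x - a * ρ x))
      - ρ x * Hu (x, deriv u₀ x - a * Dρ x, u₀ x - a * ρ x)) with hψdef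
  have hψapp : ∀ x a, ψ x a = Θ * ρ x
      + (-(Dρ x * Hp (x, deriv u₀ x - a * Dρ x, u₀ x - a * ρ x))
      - ρ x * Hu (x, deriv u₀ x - a * Dρ x, u₀ x - a * ρ x)) := fun x a => rfl
  have hφapp : ∀ x a, φ x a
      = Θ * a * ρ x + H x (deriv u₀ x - a * Dρ x) (u₀ x - a * ρ x) := fun x a => rfl
  have hφd : ∀ x a, HasDerivAt (φ x) (ψ x a) a := by
    intro x a
    have h1 : HasDerivAt (fun a' => Θ * a' * ρ x) (Θ * ρ x) a := by
      simpa using ((hasDerivAt_id a).const_mul Θ).mul_const (ρ x)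
    exact h1.add (hmix x (deriv u₀ x) (u₀ x) (Dρ x) (ρ x) a)
  have hψ0 : ∀ x, ψ x 0 = (Θ - μ) * ρ x := by
    intro x
    have e1 : deriv u₀ x - 0 * Dρ x = deriv u₀ x := by ring
    have e2 : u₀ x - 0 * ρ x = u₀ x := by ring
    rw [hψapp, e1, e2, ← hB' x]
    have e3 : Dρ x * B x = ρ x * (μ - Hu (x, deriv u₀ x, u₀ x)) := by
      simp only [hDρdef, hgdef]
      rw [mul_assoc, div_mul_cancel₀ _ (hA x)]
    rw [e3]
    ring
  have hφ0 : ∀ x, φ x 0 = 0 := by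
    intro x
    have e1 : deriv u₀ x - 0 * Dρ x = deriv u₀ x := by ring
    have e2 : u₀ x - 0 * ρ x = u₀ x := by ring
    rw [hφapp, e1, e2, hu₀_sol x]
    ring
  have hψ_per : ∀ x a, ψ (x + 1) a = ψ x a := by
    intro x a
    rw [hψapp, hψapp, hρ_per, hDρ_per, hdu₀_per, hu₀_per, hHp_per, hHu_per]
  -- ## Continuity & compactness
  have hψ_cont : Continuous (fun q : ℝ × ℝ => ψ q.1 q.2) := by
    have hc1 : Continuous (fun q : ℝ × ℝ =>
        ((q.1, deriv u₀ q.1 - q.2 * Dρ q.1, u₀ q.1 - q.2 * ρ q.1) : ℝ × ℝ × ℝ)) := by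
      refine continuous_fst.prodMk (Continuous.prodMk ?_ ?_)
      · exact ((hdu₀_smooth.continuous).comp continuous_fst).sub
          (continuous_snd.mul ((hDρ_smooth.continuous).comp continuous_fst))
      · exact ((hu₀_smooth.continuous).comp continuous_fst).sub
          (continuous_snd.mul ((hρ_smooth.continuous).comp continuous_fst))
    refine (continuous_const.mul ((hρ_smooth.continuous).comp continuous_fst)).add
      (Continuous.sub (Continuous.neg ?_) ?_)
    · exact ((hDρ_smooth.continuous).comp continuous_fst).mul
        ((hHp_smooth.continuous).comp hc1)
    · exact ((hρ_smooth.continuous).comp continuous_fst).mul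
        ((hHu_smooth.continuous).comp hc1)
  have hKU : (Set.Icc (0:ℝ) 1 ×ˢ ({0} : Set ℝ)) ⊆ {q : ℝ × ℝ | ψ q.1 q.2 < 0} := by
    rintro ⟨x, a⟩ ⟨_, ha⟩
    simp only [Set.mem_singleton_iff] at ha
    subst ha
    show ψ x 0 < 0
    rw [hψ0]
    have : Θ - μ < 0 := by linarith [hΘ.2]
    exact mul_neg_of_neg_of_pos this (hρpos x)
  obtain ⟨δ, hδpos, hδ⟩ := (isCompact_Icc.prod isCompact_singleton).exists_thickening_subset_open
    (isOpen_lt hψ_cont continuous_const) hKU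
  set ε₀ : ℝ := δ / 2 with hε₀def
  have hε₀pos : 0 < ε₀ := by positivity
  have hψneg : ∀ x, ∀ a ∈ Set.Icc (0:ℝ) ε₀, ψ x a < 0 := by
    have hbase : ∀ x ∈ Set.Icc (0:ℝ) 1, ∀ a ∈ Set.Icc (0:ℝ) ε₀, ψ x a < 0 := by
      intro x hx a ha
      have hmem : ((x, a) : ℝ × ℝ) ∈ Metric.thickening δ (Set.Icc (0:ℝ) 1 ×ˢ ({0} : Set ℝ)) := by
        rw [Metric.mem_thickening_iff]
        refine ⟨(x, 0), ⟨hx, rfl⟩, ?_⟩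
        rw [Prod.dist_eq]
        simp only [dist_self, Real.dist_eq, sub_zero]
        rw [abs_of_nonneg ha.1]
        calc max 0 a = a := max_eq_right ha.1
          _ ≤ ε₀ := ha.2
          _ < δ := by rw [hε₀def]; linarith
      exact hδ hmem
    intro x a ha
    have hfr : Int.fract x ∈ Set.Icc (0:ℝ) 1 := ⟨Int.fract_nonneg x, (Int.fract_lt_one x).le⟩
    have hper : Function.Periodic (fun y => ψ y a) 1 := fun y => hψ_per y a
    have heq : ψ (Int.fract x) a = ψ x a := by
      have h := hper.sub_int_mul_eq (x := x) ⌊x⌋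
      simp only [mul_one] at h
      rw [Int.fract]
      exact h
    rw [← heq]
    exact hbase _ hfr a ha
  -- φ x a ≤ 0 for a ∈ (0, ε₀]
  have hφneg : ∀ x, ∀ a ∈ Set.Ioc (0:ℝ) ε₀, φ x a ≤ 0 := by
    intro x a ha
    have hanti : StrictAntiOn (φ x) (Set.Icc 0 ε₀) := by
      apply strictAntiOn_of_deriv_neg (convex_Icc _ _)
      · exact (fun b _ => ((hφd x b).differentiableAt.continuousAt.continuousWithinAt))
      · intro b hb
        rw [interior_Icc] at hb
        rw [(hφd x b).deriv]
        exact hψneg x b ⟨hb.1.le, hb.2.le⟩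
    have h1 : φ x a < φ x 0 :=
      hanti ⟨le_refl 0, hε₀pos.le⟩ ⟨ha.1.le, ha.2⟩ ha.1
    rw [hφ0 x] at h1
    exact h1.le
  -- ## Conclusion
  refine ⟨ε₀, hε₀pos, fun ε hε => ⟨?_, ?_⟩⟩
  · exact (hu₀_smooth.comp contDiff_fst).sub
      (((contDiff_const.mul (hρ_smooth.comp contDiff_fst))).mul
        ((contDiff_const.mul contDiff_snd).exp))
  · intro x t ht
    have hE1 : Real.exp (-Θ * t) ≤ 1 := by
      rw [Real.exp_le_one_iff]
      have := hΘ.1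
      have ht' : 0 ≤ t := ht
      nlinarith
    have hEpos : 0 < Real.exp (-Θ * t) := Real.exp_pos _
    set E : ℝ := Real.exp (-Θ * t) with hEdef
    set a : ℝ := ε * E with hadef
    have hapos : 0 < a := mul_pos hε.1 hEpos
    have hale : a ≤ ε₀ := by
      calc a = ε * E := rfl
        _ ≤ ε * 1 := by apply mul_le_mul_of_nonneg_left hE1 hε.1.le
        _ = ε := mul_one ε
        _ ≤ ε₀ := hε.2
    have hdt : HasDerivAt (fun s => u₀ x - ε * ρ x * Real.exp (-Θ * s))
        (Θ * a * ρ x) t := by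
      have h := (((hasDerivAt_id t).const_mul (-Θ)).exp.const_mul (ε * ρ x)).const_sub (u₀ x)
      refine h.congr_deriv (Eq.symm ?_)
      simp only [hadef, hEdef, id_eq]
      ring
    have hdx : HasDerivAt (fun y => u₀ y - ε * ρ y * Real.exp (-Θ * t))
        (deriv u₀ x - a * Dρ x) x := by
      have h := (hu₀d x).sub (((hρd x).const_mul ε).mul_const E)
      refine h.congr_deriv (Eq.symm ?_)
      simp only [hadef]
      ring
    rw [hdt.deriv, hdx.deriv]
    have e2 : u₀ x - ε * ρ x * E = u₀ x - a * ρ x := by rw [hadef]; ring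
    rw [e2]
    exact hφneg x a ⟨hapos, hale⟩
end

section
/- Assume μ < 0 and fix Θ ∈ (μ, 0). Define w_ε(x,t) := u₀(x) − ε·ρ(x)·e^{−Θt}. Then there exists ε̃₀ > 0 (depending on Θ) such that for every ε ∈ (0, ε̃₀], w_ε is a C^∞ supersolution of the evolutionary equation on a finite time interval: ∂_t w_ε(x,t) + H(x, ∂_x w_ε(x,t), w_ε(x,t)) ≥ 0 for every x ∈ ℝ and every t ∈ [0, (ln ε̃₀ − ln|ε|)/(−Θ)]. -/
open Real Set Filter FormalMultilinearSeries
open scoped NNReal ENNReal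

theorem stmt_6
    (H : ℝ → ℝ → ℝ → ℝ)
    (hH_smooth : ContDiff ℝ (⊤ : ℕ∞) (fun q : ℝ × ℝ × ℝ => H q.1 q.2.1 q.2.2))
    (hH_per : ∀ x p u, H (x + 1) p u = H x p u)
    (hH1 : ∀ x p u, 0 < iteratedDeriv 2 (fun p' => H x p' u) p)
    (hH2 : ∀ x u, Filter.Tendsto (fun p : ℝ => H x p u / |p|) (Filter.cocompact ℝ) Filter.atTop)
    (κ : ℝ) (hκ : 0 < κ)
    (hH3 : ∀ x p u, |deriv (fun u' => H x p u') u| ≤ κ)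
    (u₀ : ℝ → ℝ) (hu₀_smooth : ContDiff ℝ (⊤ : ℕ∞) u₀)
    (hu₀_per : ∀ x, u₀ (x + 1) = u₀ x)
    (hu₀_sol : ∀ x, H x (deriv u₀ x) (u₀ x) = 0)
    (B : ℝ → ℝ)
    (hB : ∀ x, B x = deriv (fun p => H x p (u₀ x)) (deriv u₀ x))
    (hA : ∀ x, B x ≠ 0)
    (μ : ℝ)
    (hμ : μ = (∫ τ in (0:ℝ)..1, deriv (fun u' => H τ (deriv u₀ τ) u') (u₀ τ) / B τ) /
        (∫ τ in (0:ℝ)..1, 1 / B τ))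
    (ρ : ℝ → ℝ)
    (hρ : ∀ x, ρ x = Real.exp (∫ τ in (0:ℝ)..x,
        (μ - deriv (fun u' => H τ (deriv u₀ τ) u') (u₀ τ)) / B τ))
    (hμ_neg : μ < 0) (Θ : ℝ) (hΘ : Θ ∈ Set.Ioo μ (0:ℝ))
    :
    ∃ ε₀ > (0:ℝ), ∀ ε ∈ Set.Ioc (0:ℝ) ε₀,
      ContDiff ℝ (⊤ : ℕ∞) (fun q : ℝ × ℝ => u₀ q.1 - ε * ρ q.1 * Real.exp (-Θ * q.2)) ∧
      ∀ x : ℝ, ∀ t ∈ Set.Icc (0:ℝ) ((Real.log ε₀ - Real.log |ε|) / (-Θ)),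
        0 ≤ deriv (fun s => u₀ x - ε * ρ x * Real.exp (-Θ * s)) t +
          H x (deriv (fun y => u₀ y - ε * ρ y * Real.exp (-Θ * t)) x)
            (u₀ x - ε * ρ x * Real.exp (-Θ * t)) := by
  obtain ⟨hμΘ, hΘ0⟩ := hΘ
  set Hf : ℝ × ℝ × ℝ → ℝ := fun q => H q.1 q.2.1 q.2.2 with hHfdef
  have hHfs : ContDiff ℝ (⊤ : ℕ∞) Hf := hH_smooth
  have hHfd : Differentiable ℝ Hf := hHfs.differentiable (by simp)
  have key_p : ∀ x p u : ℝ, HasDerivAt (fun p' => H x p' u)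
      (fderiv ℝ Hf (x,p,u) ((0:ℝ),(1:ℝ),(0:ℝ))) p := by
    intro x p u
    have hL : HasDerivAt (fun p' : ℝ => ((x, p', u) : ℝ×ℝ×ℝ)) ((0:ℝ),(1:ℝ),(0:ℝ)) p :=
      (hasDerivAt_const p x).prodMk ((hasDerivAt_id p).prodMk (hasDerivAt_const p u))
    exact ((hHfd (x,p,u)).hasFDerivAt).comp_hasDerivAt p hL
  have key_u : ∀ x p u : ℝ, HasDerivAt (fun u' => H x p u')
      (fderiv ℝ Hf (x,p,u) ((0:ℝ),(0:ℝ),(1:ℝ))) u := by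
    intro x p u
    have hL : HasDerivAt (fun u' : ℝ => ((x, p, u') : ℝ×ℝ×ℝ)) ((0:ℝ),(0:ℝ),(1:ℝ)) u :=
      (hasDerivAt_const u x).prodMk ((hasDerivAt_const u p).prodMk (hasDerivAt_id u))
    exact ((hHfd (x,p,u)).hasFDerivAt).comp_hasDerivAt u hL
  set Gp : ℝ×ℝ×ℝ → ℝ := fun q => fderiv ℝ Hf q ((0:ℝ),(1:ℝ),(0:ℝ)) with hGpdef
  set Gu : ℝ×ℝ×ℝ → ℝ := fun q => fderiv ℝ Hf q ((0:ℝ),(0:ℝ),(1:ℝ)) with hGudef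
  have hGps : ContDiff ℝ (⊤ : ℕ∞) Gp := (hHfs.fderiv_right (by simp)).clm_apply contDiff_const
  have hGus : ContDiff ℝ (⊤ : ℕ∞) Gu := (hHfs.fderiv_right (by simp)).clm_apply contDiff_const
  have hfper : ∀ q : ℝ×ℝ×ℝ, fderiv ℝ Hf (q + (1,0,0)) = fderiv ℝ Hf q := by
    intro q
    have hHf_per : (fun y : ℝ×ℝ×ℝ => Hf (y + (1,0,0))) = Hf := by
      funext y
      show H (y.1 + 1) (y.2.1 + 0) (y.2.2 + 0) = H y.1 y.2.1 y.2.2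
      rw [add_zero, add_zero, hH_per]
    have h1 : HasFDerivAt (fun y : ℝ×ℝ×ℝ => Hf (y + (1,0,0))) (fderiv ℝ Hf (q + (1,0,0))) q := by
      have := ((hHfd (q + (1,0,0))).hasFDerivAt).comp q ((hasFDerivAt_id q).add_const (1,0,0))
      simp at this; exact this
    rw [hHf_per] at h1
    rw [← h1.fderiv]
  have hGp_per : ∀ x p u : ℝ, Gp (x+1, p, u) = Gp (x,p,u) := by
    intro x p u
    have : ((x,p,u) : ℝ×ℝ×ℝ) + (1,0,0) = (x+1,p,u) := by
      simp [Prod.ext_iff]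
    rw [hGpdef]
    simp only [← this, hfper]
  have hGu_per : ∀ x p u : ℝ, Gu (x+1, p, u) = Gu (x,p,u) := by
    intro x p u
    have : ((x,p,u) : ℝ×ℝ×ℝ) + (1,0,0) = (x+1,p,u) := by
      simp [Prod.ext_iff]
    rw [hGudef]
    simp only [← this, hfper]
  -- data along the stationary solution
  have hu₀d : Differentiable ℝ u₀ := hu₀_smooth.differentiable (by simp)
  have hads : ContDiff ℝ (⊤ : ℕ∞) (deriv u₀) := by
    have h1 : ContDiff ℝ (⊤ : ℕ∞) (fderiv ℝ u₀) := hu₀_smooth.fderiv_right (by simp)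
    have h2 : ContDiff ℝ (⊤ : ℕ∞) (fun x => fderiv ℝ u₀ x 1) := h1.clm_apply contDiff_const
    have h3 : deriv u₀ = fun x => fderiv ℝ u₀ x 1 := by
      funext x; rw [fderiv_apply_one_eq_deriv]
    rw [h3]; exact h2
  have ha_per : ∀ x, deriv u₀ (x+1) = deriv u₀ x := by
    intro x
    have h1 : HasDerivAt (fun y => u₀ (y + 1)) (deriv u₀ (x+1)) x := by
      have := ((hu₀d (x+1)).hasDerivAt).comp x ((hasDerivAt_id x).add_const 1)
      simp at this; exact this
    have h2 : (fun y => u₀ (y + 1)) = u₀ := funext hu₀_per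
    rw [h2] at h1
    exact h1.deriv.symm
  set φ : ℝ → ℝ×ℝ×ℝ := fun x => (x, deriv u₀ x, u₀ x) with hφdef
  have hφs : ContDiff ℝ (⊤ : ℕ∞) φ := contDiff_id.prodMk (hads.prodMk hu₀_smooth)
  set Hu : ℝ → ℝ := fun x => Gu (φ x) with hHudef
  have hHu_eq : ∀ x, deriv (fun u' => H x (deriv u₀ x) u') (u₀ x) = Hu x := by
    intro x
    exact (key_u x (deriv u₀ x) (u₀ x)).deriv
  have hB' : ∀ x, B x = Gp (φ x) := by
    intro x
    rw [hB x]
    exact (key_p x (deriv u₀ x) (u₀ x)).deriv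
  have hBeq : B = fun x => Gp (φ x) := funext hB'
  have hHus : ContDiff ℝ (⊤ : ℕ∞) Hu := hGus.comp hφs
  have hBs : ContDiff ℝ (⊤ : ℕ∞) B := by rw [hBeq]; exact hGps.comp hφs
  have hBc : Continuous B := hBs.continuous
  set f : ℝ → ℝ := fun τ => (μ - Hu τ) / B τ with hfdef
  have hfs : ContDiff ℝ (⊤ : ℕ∞) f := (contDiff_const.sub hHus).div hBs hA
  have hfc : Continuous f := hfs.continuous
  set I : ℝ → ℝ := fun x => ∫ τ in (0:ℝ)..x, f τ with hIdef
  have hId : ∀ x, HasDerivAt I (f x) x := fun x =>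
    intervalIntegral.integral_hasDerivAt_right (hfc.intervalIntegrable 0 x)
      hfc.aestronglyMeasurable.stronglyMeasurableAtFilter hfc.continuousAt
  have hIs : ContDiff ℝ (⊤ : ℕ∞) I := by
    have hdI : deriv I = f := funext fun x => (hId x).deriv
    refine contDiff_infty_iff_deriv.mpr ⟨fun x => (hId x).differentiableAt, ?_⟩
    rw [hdI]; exact hfs
  have hρ_eq : ρ = fun x => Real.exp (I x) := by
    funext x
    rw [hρ x, hIdef]
    simp only [hHu_eq]
    rfl
  have hρs : ContDiff ℝ (⊤ : ℕ∞) ρ := by rw [hρ_eq]; exact Real.contDiff_exp.comp hIs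
  have hρd : ∀ x, HasDerivAt ρ (f x * ρ x) x := by
    intro x
    rw [hρ_eq]
    have := (hId x).exp
    convert this using 1
    rw [mul_comm]
  have hρpos : ∀ x, 0 < ρ x := fun x => by rw [hρ_eq]; exact Real.exp_pos _
  have hρc : Continuous ρ := hρs.continuous
  set ρ' : ℝ → ℝ := fun x => f x * ρ x with hρ'def
  have hρ'c : Continuous ρ' := hfc.mul hρc
  -- periodicity
  have hHu_per : ∀ x, Hu (x+1) = Hu x := by
    intro x
    rw [hHudef]
    show Gu (x+1, deriv u₀ (x+1), u₀ (x+1)) = Gu (x, deriv u₀ x, u₀ x)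
    rw [ha_per, hu₀_per, hGu_per]
  have hB_per : ∀ x, B (x+1) = B x := by
    intro x
    rw [hB' (x+1), hB' x]
    show Gp (x+1, deriv u₀ (x+1), u₀ (x+1)) = Gp (x, deriv u₀ x, u₀ x)
    rw [ha_per, hu₀_per, hGp_per]
  have hf_per : Function.Periodic f 1 := by
    intro x
    rw [hfdef]
    show (μ - Hu (x+1)) / B (x+1) = (μ - Hu x) / B x
    rw [hHu_per, hB_per]
  -- the mean-zero property of f
  have hBsign : (∀ x, 0 < B x) ∨ (∀ x, B x < 0) := by
    by_contra hcon
    push_neg at hcon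
    obtain ⟨⟨x₁, hx₁⟩, ⟨x₂, hx₂⟩⟩ := hcon
    have h0 : (0:ℝ) ∈ uIcc (B x₁) (B x₂) := by
      rw [Set.mem_uIcc]
      left
      constructor <;> linarith
    obtain ⟨z, _, hz⟩ := intermediate_value_uIcc (hBc.continuousOn (s := uIcc x₁ x₂)) h0
    exact hA z hz
  have hint1B : (∫ τ in (0:ℝ)..1, 1 / B τ) ≠ 0 := by
    have hcont : Continuous (fun τ => 1 / B τ) := continuous_const.div hBc hA
    rcases hBsign with hpos | hneg
    · have : 0 < ∫ τ in (0:ℝ)..1, 1 / B τ :=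
        intervalIntegral.intervalIntegral_pos_of_pos (hcont.intervalIntegrable 0 1)
          (fun x => one_div_pos.mpr (hpos x)) one_pos
      linarith
    · have : 0 < ∫ τ in (0:ℝ)..1, -(1 / B τ) :=
        intervalIntegral.intervalIntegral_pos_of_pos ((hcont.neg).intervalIntegrable 0 1)
          (fun x => by
            have := hneg x
            simp only [neg_pos]
            exact div_neg_of_pos_of_neg one_pos this) one_pos
      rw [intervalIntegral.integral_neg] at this
      linarith
  have hμ' : μ * ∫ τ in (0:ℝ)..1, 1 / B τ = ∫ τ in (0:ℝ)..1, Hu τ / B τ := by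
    have hμ2 : μ = (∫ τ in (0:ℝ)..1, Hu τ / B τ) / (∫ τ in (0:ℝ)..1, 1 / B τ) := by
      rw [hμ]
      congr 1
      apply intervalIntegral.integral_congr
      intro τ _
      simp only [hHu_eq]
    rw [hμ2]
    field_simp
  have hintf : (∫ τ in (0:ℝ)..1, f τ) = 0 := by
    have hHuBc : Continuous (fun τ => Hu τ / B τ) := (hHus.continuous).div hBc hA
    have h1Bc : Continuous (fun τ => 1 / B τ) := continuous_const.div hBc hA
    have heq : ∀ τ, f τ = μ * (1 / B τ) - Hu τ / B τ := by
      intro τ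
      rw [hfdef]
      show (μ - Hu τ) / B τ = μ * (1 / B τ) - Hu τ / B τ
      rw [sub_div]
      ring
    rw [intervalIntegral.integral_congr (fun τ _ => heq τ)]
    rw [intervalIntegral.integral_sub ((h1Bc.intervalIntegrable 0 1).const_mul μ)
      (hHuBc.intervalIntegrable 0 1), intervalIntegral.integral_const_mul]
    rw [hμ']
    ring
  have hI_per : ∀ x, I (x+1) = I x := by
    intro x
    rw [hIdef]
    show (∫ τ in (0:ℝ)..(x+1), f τ) = ∫ τ in (0:ℝ)..x, f τ
    have hadd : (∫ τ in (0:ℝ)..x, f τ) + (∫ τ in x..(x+1), f τ) = ∫ τ in (0:ℝ)..(x+1), f τ :=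
      intervalIntegral.integral_add_adjacent_intervals (hfc.intervalIntegrable 0 x)
        (hfc.intervalIntegrable x (x+1))
    have hshift : (∫ τ in x..(x+1), f τ) = ∫ τ in (0:ℝ)..(0+1:ℝ), f τ :=
      hf_per.intervalIntegral_add_eq x 0
    rw [← hadd, hshift]
    norm_num [hintf]
  have hρ_per : ∀ x, ρ (x+1) = ρ x := by
    intro x
    rw [hρ_eq]
    simp only [hI_per]
  have hρ'_per : ∀ x, ρ' (x+1) = ρ' x := by
    intro x
    rw [hρ'def]
    show f (x+1) * ρ (x+1) = f x * ρ x
    rw [hf_per x, hρ_per]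
  -- the perturbation function g and its c-derivative D
  set g : ℝ → ℝ → ℝ := fun x c =>
    Θ * c * ρ x + H x (deriv u₀ x - c * ρ' x) (u₀ x - c * ρ x) with hgdef
  set ψ : ℝ → ℝ → ℝ×ℝ×ℝ := fun x c =>
    (x, deriv u₀ x - c * ρ' x, u₀ x - c * ρ x) with hψdef
  set D : ℝ → ℝ → ℝ := fun x c =>
    Θ * ρ x - ρ' x * Gp (ψ x c) - ρ x * Gu (ψ x c) with hDdef
  have hψd : ∀ x c, HasDerivAt (fun c' => ψ x c') ((0:ℝ), -ρ' x, -ρ x) c := by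
    intro x c
    refine (hasDerivAt_const c x).prodMk (HasDerivAt.prodMk ?_ ?_)
    · have := ((hasDerivAt_id c).mul_const (ρ' x)).const_sub (deriv u₀ x)
      simpa using this
    · have := ((hasDerivAt_id c).mul_const (ρ x)).const_sub (u₀ x)
      simpa using this
  have hlin : ∀ pt : ℝ×ℝ×ℝ, ∀ b r : ℝ,
      fderiv ℝ Hf pt ((0:ℝ), -b, -r) = -(b * Gp pt) - r * Gu pt := by
    intro pt b r
    have hdecomp : ((0:ℝ), -b, -r) = (-b) • ((0:ℝ),(1:ℝ),(0:ℝ)) + (-r) • ((0:ℝ),(0:ℝ),(1:ℝ)) := by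
      simp [Prod.ext_iff]
    rw [hdecomp, map_add, map_smul, map_smul]
    rw [hGpdef, hGudef]
    simp [smul_eq_mul]
    ring
  have hgd : ∀ x c, HasDerivAt (fun c' => g x c') (D x c) c := by
    intro x c
    have h1 : HasDerivAt (fun c' => Θ * c' * ρ x) (Θ * ρ x) c := by
      have := ((hasDerivAt_id c).const_mul Θ).mul_const (ρ x)
      simpa using this
    have h2 : HasDerivAt (fun c' => Hf (ψ x c')) (fderiv ℝ Hf (ψ x c) ((0:ℝ), -ρ' x, -ρ x)) c :=
      ((hHfd (ψ x c)).hasFDerivAt).comp_hasDerivAt c (hψd x c)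
    have h3 := h1.add h2
    have h4 : (fun c' => Θ * c' * ρ x + Hf (ψ x c')) = fun c' => g x c' := rfl
    change HasDerivAt (fun c' => Θ * c' * ρ x + Hf (ψ x c')) _ c at h3; rw [h4] at h3
    convert h3 using 1
    rw [hlin (ψ x c) (ρ' x) (ρ x), hDdef]
    ring
  have hg0 : ∀ x, g x 0 = 0 := by
    intro x
    rw [hgdef]
    show Θ * 0 * ρ x + H x (deriv u₀ x - 0 * ρ' x) (u₀ x - 0 * ρ x) = 0
    rw [zero_mul, sub_zero, zero_mul, sub_zero, mul_zero, zero_mul, zero_add]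
    exact hu₀_sol x
  have hD0 : ∀ x, D x 0 = (Θ - μ) * ρ x := by
    intro x
    have hψ0 : ψ x 0 = φ x := by
      rw [hψdef, hφdef]
      show ((x, deriv u₀ x - 0 * ρ' x, u₀ x - 0 * ρ x) : ℝ×ℝ×ℝ) = (x, deriv u₀ x, u₀ x)
      rw [zero_mul, sub_zero, zero_mul, sub_zero]
    have hfB : f x * B x = μ - Hu x := by
      rw [hfdef]
      show (μ - Hu x) / B x * B x = μ - Hu x
      rw [div_mul_cancel₀ _ (hA x)]
    rw [hDdef]
    show Θ * ρ x - ρ' x * Gp (ψ x 0) - ρ x * Gu (ψ x 0) = (Θ - μ) * ρ x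
    rw [hψ0, ← hB' x]
    show Θ * ρ x - f x * ρ x * B x - ρ x * Hu x = (Θ - μ) * ρ x
    have : f x * ρ x * B x = (μ - Hu x) * ρ x := by
      rw [mul_comm (f x) (ρ x), mul_assoc, hfB]; ring
    rw [this]
    ring
  have hD_per : ∀ c x, D (x+1) c = D x c := by
    intro c x
    have hψper : ψ (x+1) c = (x+1, deriv u₀ x - c * ρ' x, u₀ x - c * ρ x) := by
      rw [hψdef]
      show ((x+1, deriv u₀ (x+1) - c * ρ' (x+1), u₀ (x+1) - c * ρ (x+1)) : ℝ×ℝ×ℝ) = _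
      rw [ha_per, hu₀_per, hρ'_per, hρ_per]
    rw [hDdef]
    show Θ * ρ (x+1) - ρ' (x+1) * Gp (ψ (x+1) c) - ρ (x+1) * Gu (ψ (x+1) c) = _
    rw [hψper, hρ_per, hρ'_per, hGp_per, hGu_per]
  have hDc : Continuous (fun w : ℝ×ℝ => D w.1 w.2) := by
    have hψc : Continuous (fun w : ℝ×ℝ => ψ w.1 w.2) := by
      apply Continuous.prodMk continuous_fst
      apply Continuous.prodMk
      · exact ((hads.continuous).comp continuous_fst).sub
          (continuous_snd.mul (hρ'c.comp continuous_fst))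
      · exact ((hu₀_smooth.continuous).comp continuous_fst).sub
          (continuous_snd.mul (hρc.comp continuous_fst))
    exact ((continuous_const.mul (hρc.comp continuous_fst)).sub
      ((hρ'c.comp continuous_fst).mul (hGps.continuous.comp hψc))).sub
      ((hρc.comp continuous_fst).mul (hGus.continuous.comp hψc))
  -- tube lemma: D > 0 on [0,1] × [0,ε₀]
  obtain ⟨ε₀, hε₀pos, hD_pos⟩ :
      ∃ ε₀ > (0:ℝ), ∀ x ∈ Icc (0:ℝ) 1, ∀ c ∈ Icc (0:ℝ) ε₀, 0 < D x c := by
    set U : Set (ℝ×ℝ) := {w | 0 < D w.1 w.2} with hU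
    have hUopen : IsOpen U := isOpen_lt continuous_const hDc
    have hsub : (Icc (0:ℝ) 1) ×ˢ ({0} : Set ℝ) ⊆ U := by
      rintro ⟨x, c⟩ ⟨_, hc⟩
      rw [Set.mem_singleton_iff] at hc
      subst hc
      have hpos : 0 < D x 0 := by
        rw [hD0 x]
        nlinarith [hρpos x]
      exact hpos
    obtain ⟨v, w, hvopen, hwopen, hv, hw, hvw⟩ :=
      generalized_tube_lemma isCompact_Icc isCompact_singleton hUopen hsub
    have h0w : (0:ℝ) ∈ w := hw rfl
    obtain ⟨δ, hδpos, hδ⟩ := Metric.isOpen_iff.mp hwopen 0 h0w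
    refine ⟨δ/2, by linarith, ?_⟩
    intro x hx c hc
    have hcw : c ∈ w := by
      apply hδ
      rw [Metric.mem_ball, Real.dist_eq, sub_zero]
      rw [abs_of_nonneg hc.1]
      linarith [hc.2]
    have hm : ((x, c) : ℝ×ℝ) ∈ v ×ˢ w := Set.mem_prod.mpr ⟨hv hx, hcw⟩
    exact hvw hm
  -- extend positivity to all x by periodicity
  have hD_nonneg : ∀ x : ℝ, ∀ c ∈ Icc (0:ℝ) ε₀, 0 ≤ D x c := by
    intro x c hc
    have hper : Function.Periodic (fun y => D y c) 1 := fun y => hD_per c y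
    have hfr : D (Int.fract x) c = D x c := by
      have := hper.sub_int_mul_eq (x := x) ⌊x⌋
      simp only [mul_one] at this
      rw [← this]
      rfl
    rw [← hfr]
    exact (hD_pos (Int.fract x) ⟨Int.fract_nonneg x, (Int.fract_lt_one x).le⟩ c hc).le
  -- nonnegativity of g for small c via MVT
  have hg_nonneg : ∀ x : ℝ, ∀ c ∈ Icc (0:ℝ) ε₀, 0 ≤ g x c := by
    intro x c hc
    rcases eq_or_lt_of_le hc.1 with heq | hlt
    · rw [← heq, hg0 x]
    · have hcont : ContinuousOn (fun c' => g x c') (Icc 0 c) := fun z _ =>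
        ((hgd x z).continuousAt).continuousWithinAt
      have hderiv : ∀ z ∈ Ioo (0:ℝ) c, HasDerivAt (fun c' => g x c') (D x z) z :=
        fun z _ => hgd x z
      obtain ⟨e, he, heq2⟩ :=
        exists_hasDerivAt_eq_slope (fun c' => g x c') (fun z => D x z) hlt hcont hderiv
      have hDe : 0 ≤ D x e := hD_nonneg x e ⟨he.1.le, he.2.le.trans hc.2⟩
      rw [heq2] at hDe
      rw [hg0 x] at hDe
      have hcpos : 0 < c := hlt
      have := div_nonneg_iff.mp hDe
      rcases this with ⟨h1, _⟩ | ⟨_, h2⟩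
      · linarith
      · linarith
  -- conclusion
  refine ⟨ε₀, hε₀pos, ?_⟩
  rintro ε ⟨hε0, hεε₀⟩
  constructor
  · -- smoothness
    exact (hu₀_smooth.comp contDiff_fst).sub
      ((contDiff_const.mul (hρs.comp contDiff_fst)).mul
        (Real.contDiff_exp.comp (contDiff_const.mul contDiff_snd)))
  · intro x t ⟨ht0, htT⟩
    set E : ℝ := Real.exp (-Θ * t) with hE
    have hEpos : 0 < E := Real.exp_pos _
    set c : ℝ := ε * E with hc
    have hc0 : 0 < c := mul_pos hε0 hEpos
    have hcε₀ : c ≤ ε₀ := by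
      have hΘ' : 0 < -Θ := by linarith
      have h1 : -Θ * t ≤ Real.log ε₀ - Real.log ε := by
        rw [le_div_iff₀ hΘ'] at htT
        calc -Θ * t = t * (-Θ) := by ring
          _ ≤ Real.log ε₀ - Real.log |ε| := htT
          _ = Real.log ε₀ - Real.log ε := by rw [abs_of_pos hε0]
      have h2 : E ≤ ε₀ / ε := by
        rw [hE]
        calc Real.exp (-Θ * t) ≤ Real.exp (Real.log ε₀ - Real.log ε) :=
              Real.exp_le_exp.mpr h1
          _ = ε₀ / ε := by
              rw [Real.exp_sub, Real.exp_log hε₀pos, Real.exp_log hε0]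
      calc c = ε * E := hc
        _ ≤ ε * (ε₀ / ε) := by
            apply mul_le_mul_of_nonneg_left h2 hε0.le
        _ = ε₀ := by field_simp
    -- time derivative
    have hdt : deriv (fun s => u₀ x - ε * ρ x * Real.exp (-Θ * s)) t
        = ε * ρ x * Θ * E := by
      have h1 : HasDerivAt (fun s : ℝ => -Θ * s) (-Θ) t := by
        have := (hasDerivAt_id t).const_mul (-Θ)
        simpa using this
      have h2 := h1.exp
      have h3 := (h2.const_mul (ε * ρ x)).const_sub (u₀ x)
      have h4 := h3.deriv
      rw [h4, hE]
      ring
    -- space derivative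
    have hdx : deriv (fun y => u₀ y - ε * ρ y * Real.exp (-Θ * t)) x
        = deriv u₀ x - c * ρ' x := by
      have h1 : HasDerivAt (fun y => ε * ρ y) (ε * (f x * ρ x)) x := (hρd x).const_mul ε
      have h2 := h1.mul_const E
      have h3 := ((hu₀d x).hasDerivAt).sub h2
      have h4 : (fun y => u₀ y - ε * ρ y * E) = fun y => u₀ y - ε * ρ y * Real.exp (-Θ * t) := rfl
      change HasDerivAt (fun y => u₀ y - ε * ρ y * E) _ x at h3; rw [h4] at h3
      rw [h3.deriv, hc, hρ'def]
      show deriv u₀ x - ε * (f x * ρ x) * E = deriv u₀ x - ε * E * (f x * ρ x)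
      ring
    rw [hdt, hdx]
    have harg : u₀ x - ε * ρ x * Real.exp (-Θ * t) = u₀ x - c * ρ x := by
      rw [hc, hE]; ring
    rw [harg]
    have hfinal := hg_nonneg x c ⟨hc0.le, hcε₀⟩
    have hgc : g x c = ε * ρ x * Θ * E + H x (deriv u₀ x - c * ρ' x) (u₀ x - c * ρ x) := by
      have h5 : g x c = Θ * c * ρ x + H x (deriv u₀ x - c * ρ' x) (u₀ x - c * ρ x) := rfl
      rw [h5, hc]
      ring
    rw [hgc] at hfinal
    exact hfinal
end

section
/- Assume μ < 0 and fix Θ ∈ (μ, 0). Define w_ε(x,t) := u₀(x) − ε·ρ(x)·e^{−Θt}. Then there exists ε̃₀ > 0 (depending on Θ) such that for every ε ∈ [−ε̃₀, 0), w_ε is a C^∞ subsolution of the evolutionary equation on a finite time interval: ∂_t w_ε(x,t) + H(x, ∂_x w_ε(x,t), w_ε(x,t)) ≤ 0 for every x ∈ ℝ and every t ∈ [0, (ln ε̃₀ − ln|ε|)/(−Θ)]. -/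
open Real Set Filter FormalMultilinearSeries

theorem stmt_7
    (H : ℝ → ℝ → ℝ → ℝ)
    (hH_smooth : ContDiff ℝ (⊤ : ℕ∞) (fun q : ℝ × ℝ × ℝ => H q.1 q.2.1 q.2.2))
    (hH_per : ∀ x p u, H (x + 1) p u = H x p u)
    (hH1 : ∀ x p u, 0 < iteratedDeriv 2 (fun p' => H x p' u) p)
    (hH2 : ∀ x u, Filter.Tendsto (fun p : ℝ => H x p u / |p|) (Filter.cocompact ℝ) Filter.atTop)
    (κ : ℝ) (hκ : 0 < κ)
    (hH3 : ∀ x p u, |deriv (fun u' => H x p u') u| ≤ κ)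
    (u₀ : ℝ → ℝ) (hu₀_smooth : ContDiff ℝ (⊤ : ℕ∞) u₀)
    (hu₀_per : ∀ x, u₀ (x + 1) = u₀ x)
    (hu₀_sol : ∀ x, H x (deriv u₀ x) (u₀ x) = 0)
    (B : ℝ → ℝ)
    (hB : ∀ x, B x = deriv (fun p => H x p (u₀ x)) (deriv u₀ x))
    (hA : ∀ x, B x ≠ 0)
    (μ : ℝ)
    (hμ : μ = (∫ τ in (0:ℝ)..1, deriv (fun u' => H τ (deriv u₀ τ) u') (u₀ τ) / B τ) /
        (∫ τ in (0:ℝ)..1, 1 / B τ))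
    (ρ : ℝ → ℝ)
    (hρ : ∀ x, ρ x = Real.exp (∫ τ in (0:ℝ)..x,
        (μ - deriv (fun u' => H τ (deriv u₀ τ) u') (u₀ τ)) / B τ))
    (hμ_neg : μ < 0) (Θ : ℝ) (hΘ : Θ ∈ Set.Ioo μ (0:ℝ))
    :
    ∃ ε₀ > (0:ℝ), ∀ ε ∈ Set.Ico (-ε₀) (0:ℝ),
      ContDiff ℝ (⊤ : ℕ∞) (fun q : ℝ × ℝ => u₀ q.1 - ε * ρ q.1 * Real.exp (-Θ * q.2)) ∧
      ∀ x : ℝ, ∀ t ∈ Set.Icc (0:ℝ) ((Real.log ε₀ - Real.log |ε|) / (-Θ)),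
        deriv (fun s => u₀ x - ε * ρ x * Real.exp (-Θ * s)) t +
          H x (deriv (fun y => u₀ y - ε * ρ y * Real.exp (-Θ * t)) x)
            (u₀ x - ε * ρ x * Real.exp (-Θ * t)) ≤ 0 := by
  -- ## Setup
  set Hf : ℝ × ℝ × ℝ → ℝ := fun q => H q.1 q.2.1 q.2.2 with hHf
  have hHdiff : Differentiable ℝ Hf := hH_smooth.differentiable (by simp)
  set df : ℝ × ℝ × ℝ → (ℝ × ℝ × ℝ) →L[ℝ] ℝ := fderiv ℝ Hf with hdfdef
  -- chain rule helper
  have chain : ∀ (c : ℝ → ℝ × ℝ × ℝ) (c' : ℝ × ℝ × ℝ) (t : ℝ), HasDerivAt c c' t →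
      HasDerivAt (fun s => Hf (c s)) (df (c t) c') t := fun c c' t hc =>
    (hHdiff (c t)).hasFDerivAt.comp_hasDerivAt t hc
  -- slice derivatives
  have sliceP : ∀ x p u : ℝ, HasDerivAt (fun p' => H x p' u) (df (x, p, u) (0, 1, 0)) p := by
    intro x p u
    have hc : HasDerivAt (fun p' : ℝ => ((x, p', u) : ℝ × ℝ × ℝ)) ((0, 1, 0) : ℝ × ℝ × ℝ) p :=
      (hasDerivAt_const p x).prodMk ((hasDerivAt_id p).prodMk (hasDerivAt_const p u))
    exact chain _ _ p hc
  have sliceU : ∀ x p u : ℝ, HasDerivAt (fun u' => H x p u') (df (x, p, u) (0, 0, 1)) u := by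
    intro x p u
    have hc : HasDerivAt (fun u' : ℝ => ((x, p, u') : ℝ × ℝ × ℝ)) ((0, 0, 1) : ℝ × ℝ × ℝ) u :=
      (hasDerivAt_const u x).prodMk ((hasDerivAt_const u p).prodMk (hasDerivAt_id u))
    exact chain _ _ u hc
  set q₀ : ℝ → ℝ × ℝ × ℝ := fun x => (x, deriv u₀ x, u₀ x) with hq₀def
  set Hu : ℝ → ℝ := fun x => deriv (fun u' => H x (deriv u₀ x) u') (u₀ x) with hHudef
  have hHux : ∀ x, Hu x = df (q₀ x) (0, 0, 1) := fun x =>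
    (sliceU x (deriv u₀ x) (u₀ x)).deriv
  have hBx : ∀ x, B x = df (q₀ x) (0, 1, 0) := fun x =>
    (hB x).trans (sliceP x (deriv u₀ x) (u₀ x)).deriv
  -- ## Smoothness of basic objects
  have hu₀d : Differentiable ℝ u₀ := hu₀_smooth.differentiable (by simp)
  have hdf_smooth : ContDiff ℝ (⊤ : ℕ∞) df := hH_smooth.fderiv_right (by simp)
  have hfderivu₀ : ContDiff ℝ (⊤ : ℕ∞) (fderiv ℝ u₀) := hu₀_smooth.fderiv_right (by simp)
  have hdu₀ : ContDiff ℝ (⊤ : ℕ∞) (deriv u₀) := by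
    have : (deriv u₀) = fun x => fderiv ℝ u₀ x 1 := by
      funext x; exact fderiv_apply_one_eq_deriv.symm
    rw [this]
    exact hfderivu₀.clm_apply contDiff_const
  have hq₀ : ContDiff ℝ (⊤ : ℕ∞) q₀ := contDiff_id.prodMk (hdu₀.prodMk hu₀_smooth)
  have hHu : ContDiff ℝ (⊤ : ℕ∞) Hu := by
    have : Hu = fun x => (df (q₀ x)) ((0:ℝ), (0:ℝ), (1:ℝ)) := funext hHux
    rw [this]
    exact (hdf_smooth.comp hq₀).clm_apply contDiff_const
  have hBsm : ContDiff ℝ (⊤ : ℕ∞) B := by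
    have : B = fun x => (df (q₀ x)) ((0:ℝ), (1:ℝ), (0:ℝ)) := funext hBx
    rw [this]
    exact (hdf_smooth.comp hq₀).clm_apply contDiff_const
  set ψ : ℝ → ℝ := fun x => (μ - Hu x) / B x with hψdef
  have hψ_sm : ContDiff ℝ (⊤ : ℕ∞) ψ := (contDiff_const.sub hHu).div hBsm hA
  have hψc : Continuous ψ := hψ_sm.continuous
  -- ## ρ and its derivative
  set I : ℝ → ℝ := fun x => ∫ τ in (0:ℝ)..x, ψ τ with hIdef
  have hI : ∀ x, HasDerivAt I (ψ x) x := by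
    intro x
    exact intervalIntegral.integral_hasDerivAt_right
      (hψc.intervalIntegrable 0 x) (hψc.stronglyMeasurableAtFilter _ _) hψc.continuousAt
  have hρ' : ∀ x, ρ x = Real.exp (I x) := hρ
  have hρeq : ρ = fun x => Real.exp (I x) := funext hρ'
  have hρpos : ∀ x, 0 < ρ x := fun x => by rw [hρ' x]; exact Real.exp_pos _
  have hρd : ∀ x, HasDerivAt ρ (ρ x * ψ x) x := by
    intro x
    rw [hρeq]
    have := (hI x).exp
    simpa [hρ' x] using this
  have hρ_sm : ContDiff ℝ (⊤ : ℕ∞) ρ := by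
    have hIsm : ContDiff ℝ (⊤ : ℕ∞) I := by
      rw [contDiff_infty_iff_deriv]
      refine ⟨fun x => (hI x).differentiableAt, ?_⟩
      have : deriv I = ψ := funext fun x => (hI x).deriv
      rw [this]; exact hψ_sm
    rw [hρeq]
    exact (Real.contDiff_exp (n := (⊤ : ℕ∞))).comp hIsm
  -- ## Periodicity
  have hHf_per : ∀ q : ℝ × ℝ × ℝ, Hf (q + ((1:ℝ), (0:ℝ), (0:ℝ))) = Hf q := by
    rintro ⟨x, p, u⟩
    show H (x + 1) (p + 0) (u + 0) = H x p u
    rw [add_zero, add_zero, hH_per]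
  have hdf_per : ∀ q : ℝ × ℝ × ℝ, df (q + ((1:ℝ), (0:ℝ), (0:ℝ))) = df q := by
    intro q
    set v : ℝ × ℝ × ℝ := ((1:ℝ), (0:ℝ), (0:ℝ)) with hv
    have htrans : HasFDerivAt (fun y : ℝ × ℝ × ℝ => y + v) (ContinuousLinearMap.id ℝ _) q :=
      (hasFDerivAt_id q).add_const v
    have hcomp : HasFDerivAt (fun y => Hf (y + v)) ((df (q + v)).comp (ContinuousLinearMap.id ℝ _)) q :=
      by have := (hHdiff (q + v)).hasFDerivAt.comp q htrans; exact this
    have heq : (fun y => Hf (y + v)) = Hf := funext hHf_per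
    rw [heq, ContinuousLinearMap.comp_id] at hcomp
    exact (hcomp.fderiv).symm
  have hdu₀_per : ∀ x, deriv u₀ (x + 1) = deriv u₀ x := by
    intro x
    have : (fun y => u₀ (y + 1)) = u₀ := funext hu₀_per
    calc deriv u₀ (x + 1) = deriv (fun y => u₀ (y + 1)) x := (deriv_comp_add_const u₀ 1 x).symm
      _ = deriv u₀ x := by rw [this]
  have hq₀_per : ∀ x, q₀ (x + 1) = q₀ x + ((1:ℝ), (0:ℝ), (0:ℝ)) := by
    intro x
    show ((x+1, deriv u₀ (x+1), u₀ (x+1)) : ℝ × ℝ × ℝ) = (x, deriv u₀ x, u₀ x) + (1, 0, 0)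
    rw [hdu₀_per, hu₀_per]
    show _ = ((x + 1, deriv u₀ x + 0, u₀ x + 0) : ℝ × ℝ × ℝ)
    rw [add_zero, add_zero]
  have hHu_per : ∀ x, Hu (x + 1) = Hu x := by
    intro x; rw [hHux, hHux, hq₀_per, hdf_per]
  have hB_per : ∀ x, B (x + 1) = B x := by
    intro x; rw [hBx, hBx, hq₀_per, hdf_per]
  have hψ_per : Function.Periodic ψ 1 := by
    intro x; simp only [hψdef]; rw [hHu_per, hB_per]
  have hρ_per : ∀ x, ρ (x + 1) = ρ x := by
    intro x
    -- ∫₀¹ ψ = 0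
    have hCne : (∫ τ in (0:ℝ)..1, 1 / B τ) ≠ 0 := by
      intro h
      rw [h, div_zero] at hμ
      exact absurd (hμ ▸ hμ_neg) (lt_irrefl 0)
    have hBcont : Continuous B := hBsm.continuous
    have hHucont : Continuous Hu := hHu.continuous
    have hint1 : IntervalIntegrable (fun τ => μ * (1 / B τ)) MeasureTheory.volume 0 1 :=
      (continuous_const.mul (continuous_const.div hBcont hA)).intervalIntegrable 0 1
    have hint2 : IntervalIntegrable (fun τ => Hu τ / B τ) MeasureTheory.volume 0 1 :=
      (hHucont.div hBcont hA).intervalIntegrable 0 1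
    have hsplit : (∫ τ in (0:ℝ)..1, ψ τ) =
        (∫ τ in (0:ℝ)..1, μ * (1 / B τ)) - (∫ τ in (0:ℝ)..1, Hu τ / B τ) := by
      rw [← intervalIntegral.integral_sub hint1 hint2]
      apply intervalIntegral.integral_congr
      intro τ _
      show (μ - Hu τ) / B τ = μ * (1 / B τ) - Hu τ / B τ
      rw [mul_one_div, ← sub_div]
    have hIzero : (∫ τ in (0:ℝ)..1, ψ τ) = 0 := by
      rw [hsplit, intervalIntegral.integral_const_mul]
      rw [hμ]
      field_simp
      exact sub_eq_zero.mpr rfl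
    have hadd : I (x + 1) = I x + ∫ τ in (0:ℝ)..(0:ℝ)+1, ψ τ := by
      have := hψ_per.intervalIntegral_add_eq_add 0 x
        (fun t₁ t₂ => hψc.intervalIntegrable t₁ t₂)
      simpa [hIdef] using this
    rw [hρ' (x+1), hρ' x, hadd]
    simp only [zero_add]
    rw [show (∫ τ in (0:ℝ)..1, ψ τ) = 0 from hIzero, add_zero]
  -- ## The linearized quantity D
  set c2 : ℝ → ℝ → ℝ × ℝ × ℝ := fun x s => (x, deriv u₀ x + s * (ρ x * ψ x), u₀ x + s * ρ x)
    with hc2def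
  set D : ℝ → ℝ → ℝ := fun x s => -Θ * ρ x + df (c2 x s) (0, ρ x * ψ x, ρ x) with hDdef
  have hρc : Continuous ρ := hρ_sm.continuous
  have hc2cont : Continuous (fun q : ℝ × ℝ => c2 q.1 q.2) := by
    refine Continuous.prodMk continuous_fst (Continuous.prodMk ?_ ?_)
    · exact ((hdu₀.continuous.comp continuous_fst).add
        (continuous_snd.mul ((hρc.comp continuous_fst).mul (hψc.comp continuous_fst))))
    · exact ((hu₀_smooth.continuous.comp continuous_fst).add
        (continuous_snd.mul (hρc.comp continuous_fst)))
  have hDcont : Continuous (fun q : ℝ × ℝ => D q.1 q.2) := by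
    apply Continuous.add
    · exact continuous_const.mul (hρc.comp continuous_fst)
    · apply Continuous.clm_apply
      · exact ((hdf_smooth.continuous).comp hc2cont)
      · exact Continuous.prodMk continuous_const (Continuous.prodMk
          ((hρc.comp continuous_fst).mul (hψc.comp continuous_fst)) (hρc.comp continuous_fst))
  have hc20 : ∀ x, c2 x 0 = q₀ x := by
    intro x; simp only [hc2def, hq₀def, zero_mul, add_zero]
  have hD0 : ∀ x, D x 0 = (μ - Θ) * ρ x := by
    intro x
    have hvec : ((0:ℝ), ρ x * ψ x, ρ x) =
        (ρ x * ψ x) • ((0:ℝ),(1:ℝ),(0:ℝ)) + (ρ x) • ((0:ℝ),(0:ℝ),(1:ℝ)) := by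
      simp [Prod.ext_iff]
    simp only [hDdef, hc20]
    rw [hvec, map_add, map_smul, map_smul, ← hBx, ← hHux]
    simp only [smul_eq_mul, hψdef]
    have hBne := hA x
    field_simp
    ring
  have hD0neg : ∀ x, D x 0 < 0 := by
    intro x
    rw [hD0]
    have hμΘ : μ - Θ < 0 := by have := hΘ.1; linarith
    exact mul_neg_of_neg_of_pos hμΘ (hρpos x)
  have hD_per : ∀ x s, D (x + 1) s = D x s := by
    intro x s
    have hc2per : c2 (x+1) s = c2 x s + ((1:ℝ),(0:ℝ),(0:ℝ)) := by
      simp only [hc2def]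
      rw [hdu₀_per, hu₀_per, hρ_per, hψ_per x]
      show _ = ((x + 1, (deriv u₀ x + s * (ρ x * ψ x)) + 0, (u₀ x + s * ρ x) + 0) : ℝ × ℝ × ℝ)
      rw [add_zero, add_zero]
    simp only [hDdef]
    rw [hc2per, hdf_per, hρ_per x, hψ_per x]
  -- ## Choice of ε₀ via a thickening of a compact set
  have hUopen : IsOpen {q : ℝ × ℝ | D q.1 q.2 < 0} := isOpen_lt hDcont continuous_const
  have hKcomp : IsCompact ((Icc (0:ℝ) 1) ×ˢ ({0} : Set ℝ)) :=
    isCompact_Icc.prod isCompact_singleton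
  have hKU : ((Icc (0:ℝ) 1) ×ˢ ({0} : Set ℝ)) ⊆ {q : ℝ × ℝ | D q.1 q.2 < 0} := by
    rintro ⟨x, s⟩ ⟨hx, hs⟩
    have hs0 : s = 0 := hs
    show D x s < 0
    rw [hs0]
    exact hD0neg x
  obtain ⟨δ, hδpos, hδ⟩ := hKcomp.exists_thickening_subset_open hUopen hKU
  set E : ℝ := δ / 2 with hEdef
  have hEpos : 0 < E := by positivity
  have hDneg : ∀ x s, 0 ≤ s → s ≤ E → D x s < 0 := by
    have hbase : ∀ x ∈ Icc (0:ℝ) 1, ∀ s, 0 ≤ s → s ≤ E → D x s < 0 := by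
      intro x hx s hs0 hsE
      have hmem : ((x, s) : ℝ × ℝ) ∈ Metric.thickening δ ((Icc (0:ℝ) 1) ×ˢ ({0} : Set ℝ)) := by
        rw [Metric.mem_thickening_iff]
        refine ⟨(x, 0), ⟨hx, rfl⟩, ?_⟩
        rw [Prod.dist_eq]
        have h1 : dist x x = 0 := dist_self x
        have h2 : dist s (0:ℝ) = s := by rw [Real.dist_eq, sub_zero, abs_of_nonneg hs0]
        rw [h1, h2]
        have : max 0 s = s := max_eq_right hs0
        rw [this]
        linarith
      exact hδ hmem
    intro x s hs0 hsE
    have hper : Function.Periodic (fun y => D y s) 1 := fun y => hD_per y s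
    have hfx : D (Int.fract x) s = D x s := by
      have h1 : Int.fract x = x - (⌊x⌋ : ℝ) * 1 := by rw [mul_one, Int.self_sub_floor]
      rw [h1]
      exact hper.sub_int_mul_eq ⌊x⌋
    rw [← hfx]
    exact hbase _ ⟨Int.fract_nonneg x, le_of_lt (Int.fract_lt_one x)⟩ s hs0 hsE
  -- ## Key inequality Φ(x,s) ≤ 0
  have hkey : ∀ x s, 0 ≤ s → s ≤ E → -Θ * s * ρ x + Hf (c2 x s) ≤ 0 := by
    intro x s hs0 hsE
    have hΦd : ∀ σ : ℝ, HasDerivAt (fun σ => -Θ * σ * ρ x + Hf (c2 x σ)) (D x σ) σ := by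
      intro σ
      have h1 : HasDerivAt (fun σ : ℝ => -Θ * σ * ρ x) (-Θ * ρ x) σ := by
        have := ((hasDerivAt_id σ).const_mul (-Θ)).mul_const (ρ x)
        simpa using this
      have hcd : HasDerivAt (fun σ : ℝ => c2 x σ) ((0, ρ x * ψ x, ρ x) : ℝ × ℝ × ℝ) σ := by
        refine HasDerivAt.prodMk (hasDerivAt_const σ x) (HasDerivAt.prodMk ?_ ?_)
        · simpa using
            ((hasDerivAt_id σ).mul_const (ρ x * ψ x))
        · simpa using ((hasDerivAt_id σ).mul_const (ρ x))
      exact h1.add (chain _ _ σ hcd)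
    have hDxcont : Continuous (fun σ => D x σ) :=
      hDcont.comp (Continuous.prodMk continuous_const continuous_id)
    have hFTC := intervalIntegral.integral_eq_sub_of_hasDerivAt
      (fun σ _ => hΦd σ) (hDxcont.intervalIntegrable 0 s)
    have hval0 : -Θ * 0 * ρ x + Hf (c2 x 0) = 0 := by
      rw [hc20]
      have : Hf (q₀ x) = H x (deriv u₀ x) (u₀ x) := rfl
      rw [this, hu₀_sol x, mul_zero, zero_mul, add_zero]
    have hnonpos : (∫ σ in (0:ℝ)..s, D x σ) ≤ 0 := by
      have h0 : (0:ℝ) ≤ ∫ σ in (0:ℝ)..s, -D x σ := by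
        apply intervalIntegral.integral_nonneg hs0
        intro σ hσ
        have := hDneg x σ hσ.1 (le_trans hσ.2 hsE)
        linarith
      rw [intervalIntegral.integral_neg] at h0
      linarith
    rw [hFTC, hval0, sub_zero] at hnonpos
    exact hnonpos
  -- ## Conclusion
  refine ⟨E, hEpos, fun ε hε => ?_⟩
  obtain ⟨hε1, hε2⟩ := hε
  constructor
  · refine ContDiff.sub (hu₀_smooth.comp contDiff_fst) ?_
    refine ContDiff.mul (contDiff_const.mul (hρ_sm.comp contDiff_fst)) ?_
    exact (Real.contDiff_exp (n := (⊤ : ℕ∞))).comp (contDiff_const.mul contDiff_snd)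
  · intro x t ht
    obtain ⟨ht0, htT⟩ := ht
    set s : ℝ := -ε * Real.exp (-Θ * t) with hs
    have hεneg : ε < 0 := hε2
    have hs0 : 0 < s := mul_pos (by linarith) (Real.exp_pos _)
    have hΘneg : Θ < 0 := hΘ.2
    have hsE : s ≤ E := by
      have habs : |ε| = -ε := abs_of_neg hεneg
      have h2 : (0:ℝ) < -Θ := by linarith
      have h1 : -Θ * t ≤ Real.log E - Real.log |ε| := by
        have := (le_div_iff₀ h2).mp htT
        linarith [this]
      have h3 : Real.exp (-Θ * t) ≤ E / |ε| := by
        have h4 := Real.exp_le_exp.mpr h1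
        rwa [Real.exp_sub, Real.exp_log hEpos,
          Real.exp_log (abs_pos.mpr (ne_of_lt hεneg))] at h4
      have habsne : |ε| ≠ 0 := abs_ne_zero.mpr (ne_of_lt hεneg)
      calc s = |ε| * Real.exp (-Θ * t) := by rw [habs, hs]
        _ ≤ |ε| * (E / |ε|) := mul_le_mul_of_nonneg_left h3 (abs_nonneg ε)
        _ = E := by field_simp
    have hd1 : HasDerivAt (fun s' => u₀ x - ε * ρ x * Real.exp (-Θ * s'))
        (-(ε * ρ x * (Real.exp (-Θ * t) * -Θ))) t := by
      have hlin : HasDerivAt (fun s' : ℝ => -Θ * s') (-Θ) t := by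
        simpa using (hasDerivAt_id t).const_mul (-Θ)
      have hexp : HasDerivAt (fun s' : ℝ => Real.exp (-Θ * s')) (Real.exp (-Θ * t) * -Θ) t :=
        (Real.hasDerivAt_exp (-Θ * t)).comp t hlin
      exact (hexp.const_mul (ε * ρ x)).const_sub (u₀ x)
    have hd2 : HasDerivAt (fun y => u₀ y - ε * ρ y * Real.exp (-Θ * t))
        (deriv u₀ x - ε * (ρ x * ψ x) * Real.exp (-Θ * t)) x :=
      (hu₀d x).hasDerivAt.sub (((hρd x).const_mul ε).mul_const (Real.exp (-Θ * t)))
    rw [hd1.deriv, hd2.deriv]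
    have hgoal := hkey x s (le_of_lt hs0) hsE
    have harg1 : deriv u₀ x - ε * (ρ x * ψ x) * Real.exp (-Θ * t)
        = deriv u₀ x + s * (ρ x * ψ x) := by rw [hs]; ring
    have harg2 : u₀ x - ε * ρ x * Real.exp (-Θ * t) = u₀ x + s * ρ x := by rw [hs]; ring
    have hfirst : -(ε * ρ x * (Real.exp (-Θ * t) * -Θ)) = -Θ * s * ρ x := by rw [hs]; ring
    rw [harg1, harg2, hfirst]
    exact hgoal
end

section
/- Assume μ > 0 and fix Θ ∈ (μ, +∞). Define w_ε(x,t) := u₀(x) − ε·ρ(x)·e^{−Θt}. Then there exists ε̃₀ > 0 (depending on Θ) such that for every ε ∈ [−ε̃₀, 0), w_ε is a C^∞ subsolution of the evolutionary equation: ∂_t w_ε(x,t) + H(x, ∂_x w_ε(x,t), w_ε(x,t)) ≤ 0 for every x ∈ ℝ and every t ∈ [0, +∞). -/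
open Real Set Filter
open scoped NNReal ENNReal

set_option maxHeartbeats 2000000 in
theorem stmt_9
    (H : ℝ → ℝ → ℝ → ℝ)
    (hH_smooth : ContDiff ℝ (⊤ : ℕ∞) (fun q : ℝ × ℝ × ℝ => H q.1 q.2.1 q.2.2))
    (hH_per : ∀ x p u, H (x + 1) p u = H x p u)
    (hH1 : ∀ x p u, 0 < iteratedDeriv 2 (fun p' => H x p' u) p)
    (hH2 : ∀ x u, Filter.Tendsto (fun p : ℝ => H x p u / |p|) (Filter.cocompact ℝ) Filter.atTop)
    (κ : ℝ) (hκ : 0 < κ)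
    (hH3 : ∀ x p u, |deriv (fun u' => H x p u') u| ≤ κ)
    (u₀ : ℝ → ℝ) (hu₀_smooth : ContDiff ℝ (⊤ : ℕ∞) u₀)
    (hu₀_per : ∀ x, u₀ (x + 1) = u₀ x)
    (hu₀_sol : ∀ x, H x (deriv u₀ x) (u₀ x) = 0)
    (B : ℝ → ℝ)
    (hB : ∀ x, B x = deriv (fun p => H x p (u₀ x)) (deriv u₀ x))
    (hA : ∀ x, B x ≠ 0)
    (μ : ℝ)
    (hμ : μ = (∫ τ in (0:ℝ)..1, deriv (fun u' => H τ (deriv u₀ τ) u') (u₀ τ) / B τ) /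
        (∫ τ in (0:ℝ)..1, 1 / B τ))
    (ρ : ℝ → ℝ)
    (hρ : ∀ x, ρ x = Real.exp (∫ τ in (0:ℝ)..x,
        (μ - deriv (fun u' => H τ (deriv u₀ τ) u') (u₀ τ)) / B τ))
    (hμ_pos : 0 < μ) (Θ : ℝ) (hΘ : Θ ∈ Set.Ioi μ)
    :
    ∃ ε₀ > (0:ℝ), ∀ ε ∈ Set.Ico (-ε₀) (0:ℝ),
      ContDiff ℝ (⊤ : ℕ∞) (fun q : ℝ × ℝ => u₀ q.1 - ε * ρ q.1 * Real.exp (-Θ * q.2)) ∧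
      ∀ x : ℝ, ∀ t ∈ Set.Ici (0:ℝ),
        deriv (fun s => u₀ x - ε * ρ x * Real.exp (-Θ * s)) t +
          H x (deriv (fun y => u₀ y - ε * ρ y * Real.exp (-Θ * t)) x)
            (u₀ x - ε * ρ x * Real.exp (-Θ * t)) ≤ 0 := by
  have hΘμ : μ < Θ := hΘ
  have hΘpos : 0 < Θ := hμ_pos.trans hΘμ
  set H3 : ℝ × ℝ × ℝ → ℝ := fun q => H q.1 q.2.1 q.2.2 with hH3def
  have hH3s : ContDiff ℝ (⊤ : ℕ∞) H3 := hH_smooth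
  have hH3diff : Differentiable ℝ H3 := hH3s.differentiable (by simp)
  have hcurve : ∀ (γ : ℝ → ℝ × ℝ × ℝ) (v : ℝ × ℝ × ℝ) (t : ℝ), HasDerivAt γ v t →
      HasDerivAt (fun s => H3 (γ s)) (fderiv ℝ H3 (γ t) v) t := fun γ v t hγ =>
    (hH3diff (γ t)).hasFDerivAt.comp_hasDerivAt t hγ
  set Hp : ℝ × ℝ × ℝ → ℝ := fun q => fderiv ℝ H3 q (0, 1, 0) with hHpdef
  set Hu : ℝ × ℝ × ℝ → ℝ := fun q => fderiv ℝ H3 q (0, 0, 1) with hHudef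
  have hHp_eq : ∀ x p u, deriv (fun p' => H x p' u) p = Hp (x, p, u) := by
    intro x p u
    have hγ : HasDerivAt (fun p' : ℝ => ((x, p', u) : ℝ × ℝ × ℝ)) ((0:ℝ), (1:ℝ), (0:ℝ)) p :=
      (hasDerivAt_const p x).prodMk ((hasDerivAt_id' p).prodMk (hasDerivAt_const p u))
    exact (hcurve _ _ p hγ).deriv
  have hHu_eq : ∀ x p u, deriv (fun u' => H x p u') u = Hu (x, p, u) := by
    intro x p u
    have hγ : HasDerivAt (fun u' : ℝ => ((x, p, u') : ℝ × ℝ × ℝ)) ((0:ℝ), (0:ℝ), (1:ℝ)) u :=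
      (hasDerivAt_const u x).prodMk ((hasDerivAt_const u p).prodMk (hasDerivAt_id' u))
    exact (hcurve _ _ u hγ).deriv
  have hHp_per : ∀ x p u, Hp (x + 1, p, u) = Hp (x, p, u) := by
    intro x p u
    rw [← hHp_eq, ← hHp_eq]
    have h : (fun p' => H (x + 1) p' u) = fun p' => H x p' u := funext fun p' => hH_per x p' u
    rw [h]
  have hHu_per : ∀ x p u, Hu (x + 1, p, u) = Hu (x, p, u) := by
    intro x p u
    rw [← hHu_eq, ← hHu_eq]
    have h : (fun u' => H (x + 1) p u') = fun u' => H x p u' := funext fun u' => hH_per x p u'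
    rw [h]
  have hfd : ContDiff ℝ (⊤ : ℕ∞) (fun q : ℝ × ℝ × ℝ => fderiv ℝ H3 q) := hH3s.fderiv_right (by simp)
  have hHp_s : ContDiff ℝ (⊤ : ℕ∞) Hp := hfd.clm_apply contDiff_const
  have hHu_s : ContDiff ℝ (⊤ : ℕ∞) Hu := hfd.clm_apply contDiff_const
  have hu₀d : Differentiable ℝ u₀ := hu₀_smooth.differentiable (by simp)
  set u₁ : ℝ → ℝ := deriv u₀ with hu₁def
  have hu₁_s : ContDiff ℝ (⊤ : ℕ∞) u₁ :=
    (contDiff_infty_iff_deriv.mp hu₀_smooth).2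
  have hu₁_per : ∀ x, u₁ (x + 1) = u₁ x := by
    intro x
    have h1 : HasDerivAt (fun y => u₀ (y + 1)) (u₁ (x + 1)) x := by
      have h2 := (hu₀d (x + 1)).hasDerivAt
      have h3 := h2.comp x ((hasDerivAt_id' x).add_const 1)
      simpa [Function.comp_def] using h3
    have h2 : (fun y => u₀ (y + 1)) = u₀ := funext fun y => hu₀_per y
    rw [h2] at h1
    exact h1.deriv.symm
  set G : ℝ → ℝ := fun x => Hu (x, u₁ x, u₀ x) with hGdef
  have hG_s : ContDiff ℝ (⊤ : ℕ∞) G :=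
    hHu_s.comp (contDiff_id.prodMk (hu₁_s.prodMk hu₀_smooth))
  have hG_per : ∀ x, G (x + 1) = G x := by
    intro x
    show Hu (x + 1, u₁ (x + 1), u₀ (x + 1)) = Hu (x, u₁ x, u₀ x)
    rw [hu₁_per, hu₀_per, hHu_per]
  have hB_eq : ∀ x, B x = Hp (x, u₁ x, u₀ x) := fun x => (hB x).trans (hHp_eq x (u₁ x) (u₀ x))
  have hBfun : B = fun x => Hp (x, u₁ x, u₀ x) := funext hB_eq
  have hB_s : ContDiff ℝ (⊤ : ℕ∞) B := by
    rw [hBfun]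
    exact hHp_s.comp (contDiff_id.prodMk (hu₁_s.prodMk hu₀_smooth))
  have hB_per : ∀ x, B (x + 1) = B x := by
    intro x
    rw [hB_eq, hB_eq, hu₁_per, hu₀_per, hHp_per]
  set f : ℝ → ℝ := fun τ => (μ - G τ) / B τ with hfdef
  have hf_s : ContDiff ℝ (⊤ : ℕ∞) f := (contDiff_const.sub hG_s).div hB_s hA
  have hf_cont : Continuous f := hf_s.continuous
  have hf_per : ∀ x, f (x + 1) = f x := by
    intro x
    show (μ - G (x + 1)) / B (x + 1) = (μ - G x) / B x
    rw [hG_per, hB_per]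
  set F : ℝ → ℝ := fun x => ∫ τ in (0:ℝ)..x, f τ with hFdef
  have hF_deriv : ∀ x, HasDerivAt F (f x) x := fun x =>
    (hf_cont.integral_hasStrictDerivAt 0 x).hasDerivAt
  have hF_s : ContDiff ℝ (⊤ : ℕ∞) F := by
    have hdF : deriv F = f := funext fun x => (hF_deriv x).deriv
    exact contDiff_infty_iff_deriv.mpr ⟨fun x => (hF_deriv x).differentiableAt, hdF ▸ hf_s⟩
  have hint_eq : (fun τ : ℝ => (μ - deriv (fun u' => H τ (u₁ τ) u') (u₀ τ)) / B τ) = f := by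
    funext τ
    rw [hHu_eq]
  have hρfun : ρ = fun x => Real.exp (F x) := by
    funext x
    rw [hρ x]
    congr 1
    rw [hint_eq]
  have hρ_s : ContDiff ℝ (⊤ : ℕ∞) ρ := by
    rw [hρfun]
    exact Real.contDiff_exp.comp hF_s
  have hρpos : ∀ x, 0 < ρ x := by
    intro x
    rw [hρ x]
    exact Real.exp_pos _
  set r₁ : ℝ → ℝ := fun x => ρ x * f x with hr₁def
  have hρ' : ∀ x, HasDerivAt ρ (r₁ x) x := by
    intro x
    have h1 : HasDerivAt (fun y => Real.exp (F y)) (Real.exp (F x) * f x) x := (hF_deriv x).exp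
    rw [hρfun]
    show HasDerivAt (fun y => Real.exp (F y)) (ρ x * f x) x
    rw [hρfun]
    exact h1
  -- integral of f over a period is 0
  have hIB : (∫ τ in (0:ℝ)..1, 1 / B τ) ≠ 0 := by
    intro h0
    rw [h0, div_zero] at hμ
    exact absurd hμ_pos (by rw [hμ]; simp)
  have hμD : μ * (∫ τ in (0:ℝ)..1, 1 / B τ) = ∫ τ in (0:ℝ)..1, G τ / B τ := by
    have h1 := (div_eq_iff hIB).mp hμ.symm
    have h2 : (fun τ : ℝ => deriv (fun u' => H τ (u₁ τ) u') (u₀ τ) / B τ)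
        = fun τ => G τ / B τ := by
      funext τ
      rw [hHu_eq]
    rw [h2] at h1
    linarith [h1]
  have hinvB_cont : Continuous (fun τ : ℝ => 1 / B τ) :=
    continuous_const.div hB_s.continuous hA
  have hGB_cont : Continuous (fun τ : ℝ => G τ / B τ) := hG_s.continuous.div hB_s.continuous hA
  have hint0 : (∫ τ in (0:ℝ)..1, f τ) = 0 := by
    have hsplit : f = fun τ => μ * (1 / B τ) - G τ / B τ := by
      funext τ
      show (μ - G τ) / B τ = _
      rw [sub_div, mul_one_div]
    rw [hsplit, intervalIntegral.integral_sub (f := fun τ => μ * (1 / B τ)) (g := fun τ => G τ / B τ) ((continuous_const.mul hinvB_cont).intervalIntegrable _ _)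
      (hGB_cont.intervalIntegrable _ _), intervalIntegral.integral_const_mul, hμD, sub_self]
  have hfP : Function.Periodic f 1 := hf_per
  have hF_per : ∀ x, F (x + 1) = F x := by
    intro x
    have h1 : (∫ τ in (0:ℝ)..x, f τ) + (∫ τ in x..(x+1), f τ) = ∫ τ in (0:ℝ)..(x+1), f τ :=
      intervalIntegral.integral_add_adjacent_intervals (hf_cont.intervalIntegrable _ _)
        (hf_cont.intervalIntegrable _ _)
    have h2 : (∫ τ in x..(x+1), f τ) = ∫ τ in (0:ℝ)..(0+1:ℝ), f τ :=
      hfP.intervalIntegral_add_eq x 0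
    rw [show ((0:ℝ)+1) = 1 by norm_num] at h2
    rw [h2, hint0, add_zero] at h1
    exact h1.symm
  have hρ_per : Function.Periodic ρ 1 := by
    intro x
    have h1 : ρ (x + 1) = Real.exp (F (x + 1)) := by rw [hρfun]
    have h2 : ρ x = Real.exp (F x) := by rw [hρfun]
    rw [h1, h2, hF_per]
  -- minimum of ρ
  obtain ⟨xm, hxm, hxmin⟩ := isCompact_Icc.exists_isMinOn (α := ℝ) (nonempty_Icc.mpr zero_le_one)
    (hρ_s.continuous.continuousOn (s := Icc (0:ℝ) 1))
  set m : ℝ := ρ xm with hmdef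
  have hm0 : 0 < m := hρpos xm
  have hmle : ∀ x, m ≤ ρ x := by
    intro x
    have h1 : ρ (Int.fract x) = ρ x := by
      have h2 := hρ_per.sub_int_mul_eq (x := x) ⌊x⌋
      rw [mul_one, Int.self_sub_floor] at h2
      exact h2
    rw [← h1]
    exact hxmin (mem_Icc.mpr ⟨Int.fract_nonneg x, (Int.fract_lt_one x).le⟩)
  -- the perturbed Hamiltonian and its s-derivative
  set Φ : ℝ → ℝ → ℝ := fun x s => H x (u₁ x - s * r₁ x) (u₀ x - s * ρ x) with hΦdef
  set g : ℝ → ℝ → ℝ := fun x s => -(r₁ x * Hp (x, u₁ x - s * r₁ x, u₀ x - s * ρ x))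
      - ρ x * Hu (x, u₁ x - s * r₁ x, u₀ x - s * ρ x) with hgdef
  have hΦd : ∀ x s, HasDerivAt (fun s' => Φ x s') (g x s) s := by
    intro x s
    have hγ : HasDerivAt (fun s' : ℝ => ((x, u₁ x - s' * r₁ x, u₀ x - s' * ρ x) : ℝ × ℝ × ℝ))
        ((0:ℝ), -r₁ x, -ρ x) s := by
      refine (hasDerivAt_const s x).prodMk (HasDerivAt.prodMk ?_ ?_)
      · have h := ((hasDerivAt_id' s).mul_const (r₁ x)).const_sub (u₁ x)
        simpa using h
      · have h := ((hasDerivAt_id' s).mul_const (ρ x)).const_sub (u₀ x)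
        simpa using h
    have h := hcurve _ _ s hγ
    have hlin : fderiv ℝ H3 ((x, u₁ x - s * r₁ x, u₀ x - s * ρ x) : ℝ × ℝ × ℝ)
        ((0:ℝ), -r₁ x, -ρ x) = g x s := by
      have hv : ((0:ℝ), -r₁ x, -ρ x)
          = (-(r₁ x)) • (((0:ℝ), (1:ℝ), (0:ℝ)) : ℝ × ℝ × ℝ)
            + (-(ρ x)) • (((0:ℝ), (0:ℝ), (1:ℝ)) : ℝ × ℝ × ℝ) := by
        simp [Prod.ext_iff]
      rw [hv, map_add, map_smul, map_smul]
      show (-(r₁ x)) • Hp _ + (-(ρ x)) • Hu _ = g x s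
      simp only [smul_eq_mul, hgdef]
      ring
    rw [hlin] at h
    exact h
  have hΦ0 : ∀ x, Φ x 0 = 0 := by
    intro x
    show H x (u₁ x - 0 * r₁ x) (u₀ x - 0 * ρ x) = 0
    rw [zero_mul, zero_mul, sub_zero, sub_zero]
    exact hu₀_sol x
  have hg0 : ∀ x, g x 0 = -(μ * ρ x) := by
    intro x
    show -(r₁ x * Hp (x, u₁ x - 0 * r₁ x, u₀ x - 0 * ρ x))
        - ρ x * Hu (x, u₁ x - 0 * r₁ x, u₀ x - 0 * ρ x) = -(μ * ρ x)
    rw [zero_mul, zero_mul, sub_zero, sub_zero, ← hB_eq]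
    show -(ρ x * f x * B x) - ρ x * G x = -(μ * ρ x)
    have hfB : f x * B x = μ - G x := by
      show (μ - G x) / B x * B x = μ - G x
      exact div_mul_cancel₀ _ (hA x)
    have : ρ x * f x * B x = ρ x * (μ - G x) := by rw [mul_assoc, hfB]
    rw [this]
    ring
  -- continuity of g
  have hr₁_cont : Continuous r₁ := hρ_s.continuous.mul hf_cont
  have hmap_cont : Continuous (fun q : ℝ × ℝ =>
      ((q.1, u₁ q.1 - q.2 * r₁ q.1, u₀ q.1 - q.2 * ρ q.1) : ℝ × ℝ × ℝ)) := by
    refine continuous_fst.prodMk (Continuous.prodMk ?_ ?_)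
    · exact (hu₁_s.continuous.comp continuous_fst).sub
        (continuous_snd.mul (hr₁_cont.comp continuous_fst))
    · exact (hu₀_smooth.continuous.comp continuous_fst).sub
        (continuous_snd.mul (hρ_s.continuous.comp continuous_fst))
  have hg_cont : Continuous (fun q : ℝ × ℝ => g q.1 q.2) := by
    have h1 : Continuous (fun q : ℝ × ℝ =>
        -(r₁ q.1 * Hp (q.1, u₁ q.1 - q.2 * r₁ q.1, u₀ q.1 - q.2 * ρ q.1))) :=
      ((hr₁_cont.comp continuous_fst).mul (hHp_s.continuous.comp hmap_cont)).neg
    have h2 : Continuous (fun q : ℝ × ℝ =>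
        ρ q.1 * Hu (q.1, u₁ q.1 - q.2 * r₁ q.1, u₀ q.1 - q.2 * ρ q.1)) :=
      (hρ_s.continuous.comp continuous_fst).mul (hHu_s.continuous.comp hmap_cont)
    exact h1.sub h2
  -- periodicity of g in x
  have hr₁_per : ∀ x, r₁ (x + 1) = r₁ x := by
    intro x
    show ρ (x + 1) * f (x + 1) = ρ x * f x
    rw [hρ_per x, hf_per x]
  have hg_per : ∀ s, Function.Periodic (fun x => g x s) 1 := by
    intro s x
    show -(r₁ (x+1) * Hp (x+1, u₁ (x+1) - s * r₁ (x+1), u₀ (x+1) - s * ρ (x+1)))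
        - ρ (x+1) * Hu (x+1, u₁ (x+1) - s * r₁ (x+1), u₀ (x+1) - s * ρ (x+1))
        = -(r₁ x * Hp (x, u₁ x - s * r₁ x, u₀ x - s * ρ x))
          - ρ x * Hu (x, u₁ x - s * r₁ x, u₀ x - s * ρ x)
    rw [hr₁_per, hu₁_per, hu₀_per, hρ_per x, hHp_per, hHu_per]
  -- uniform smallness of g x s - g x 0
  set η : ℝ := (Θ - μ) * m with hηdef
  have hη0 : 0 < η := mul_pos (by linarith) hm0
  obtain ⟨ε₀, hε₀0, hε₀1, hε₀⟩ : ∃ ε₀ > (0:ℝ), ε₀ ≤ 1 ∧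
      ∀ x s : ℝ, |s| ≤ ε₀ → |g x s - g x 0| ≤ η := by
    have hK : IsCompact (Icc (0:ℝ) 1 ×ˢ Icc (-1:ℝ) 1) := isCompact_Icc.prod isCompact_Icc
    have hucont : UniformContinuousOn (fun q : ℝ × ℝ => g q.1 q.2)
        (Icc (0:ℝ) 1 ×ˢ Icc (-1:ℝ) 1) :=
      hK.uniformContinuousOn_of_continuous hg_cont.continuousOn
    rw [Metric.uniformContinuousOn_iff] at hucont
    obtain ⟨δ, hδ0, hδ⟩ := hucont η hη0
    refine ⟨min (δ/2) 1, by positivity, min_le_right _ _, ?_⟩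
    intro x s hs
    have hs1 : |s| ≤ 1 := hs.trans (min_le_right _ _)
    have hsδ : |s| < δ := lt_of_le_of_lt (hs.trans (min_le_left _ _)) (by linarith)
    have hfr : ∀ s' : ℝ, g (Int.fract x) s' = g x s' := by
      intro s'
      have h2 := (hg_per s').sub_int_mul_eq (x := x) ⌊x⌋
      rw [mul_one, Int.self_sub_floor] at h2
      exact h2
    have hmem1 : ((Int.fract x, s) : ℝ × ℝ) ∈ Icc (0:ℝ) 1 ×ˢ Icc (-1:ℝ) 1 := by
      constructor
      · exact mem_Icc.mpr ⟨Int.fract_nonneg x, (Int.fract_lt_one x).le⟩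
      · exact mem_Icc.mpr (abs_le.mp hs1)
    have hmem2 : ((Int.fract x, 0) : ℝ × ℝ) ∈ Icc (0:ℝ) 1 ×ˢ Icc (-1:ℝ) 1 := by
      constructor
      · exact mem_Icc.mpr ⟨Int.fract_nonneg x, (Int.fract_lt_one x).le⟩
      · exact mem_Icc.mpr ⟨by norm_num, by norm_num⟩
    have hdist : dist ((Int.fract x, s) : ℝ × ℝ) ((Int.fract x, 0) : ℝ × ℝ) < δ := by
      rw [Prod.dist_eq]
      simp only [dist_self, Real.dist_eq, sub_zero]
      exact max_lt (by linarith) hsδ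
    have h3 := hδ _ hmem1 _ hmem2 hdist
    rw [Real.dist_eq] at h3
    simp only at h3
    rw [← hfr s, ← hfr 0]
    exact (le_of_lt h3)
  refine ⟨ε₀, hε₀0, ?_⟩
  rintro ε ⟨hε1, hε2⟩
  constructor
  · exact (hu₀_smooth.comp contDiff_fst).sub
      ((contDiff_const.mul (hρ_s.comp contDiff_fst)).mul
        (Real.contDiff_exp.comp (contDiff_const.mul contDiff_snd)))
  intro x t ht
  have hE0 : 0 < Real.exp (-Θ * t) := Real.exp_pos _
  have hE1 : Real.exp (-Θ * t) ≤ 1 := by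
    rw [Real.exp_le_one_iff]
    have ht0 : 0 ≤ t := ht
    nlinarith
  set δt : ℝ := ε * Real.exp (-Θ * t) with hδtdef
  have hδt_neg : δt < 0 := mul_neg_of_neg_of_pos hε2 hE0
  have hδt_ge : -ε₀ ≤ δt := by nlinarith
  -- time derivative
  have hdt : deriv (fun s => u₀ x - ε * ρ x * Real.exp (-Θ * s)) t = Θ * ρ x * δt := by
    have he : HasDerivAt (fun s : ℝ => Real.exp (-Θ * s)) (Real.exp (-Θ * t) * -Θ) t := by
      have h2 : HasDerivAt (fun s : ℝ => -Θ * s) (-Θ) t := by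
        simpa using (hasDerivAt_id' t).const_mul (-Θ)
      simpa [mul_comm] using h2.exp
    have h1 : HasDerivAt (fun s : ℝ => u₀ x - ε * ρ x * Real.exp (-Θ * s))
        (-(ε * ρ x * (Real.exp (-Θ * t) * -Θ))) t := (he.const_mul (ε * ρ x)).const_sub (u₀ x)
    rw [h1.deriv, hδtdef]
    ring
  -- space derivative
  have hdx : deriv (fun y => u₀ y - ε * ρ y * Real.exp (-Θ * t)) x = u₁ x - δt * r₁ x := by
    have h1 : HasDerivAt (fun y => u₀ y - ε * ρ y * Real.exp (-Θ * t))
        (u₁ x - ε * r₁ x * Real.exp (-Θ * t)) x :=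
      (hu₀d x).hasDerivAt.sub (((hρ' x).const_mul ε).mul_const (Real.exp (-Θ * t)))
    rw [h1.deriv, hδtdef]
    ring
  rw [hdt, hdx, show u₀ x - ε * ρ x * Real.exp (-Θ * t) = u₀ x - δt * ρ x by
    rw [hδtdef]; ring]
  show Θ * ρ x * δt + Φ x δt ≤ 0
  -- mean value theorem
  obtain ⟨ξ, hξmem, hξ⟩ := exists_hasDerivAt_eq_slope (fun s => Φ x s) (fun s => g x s)
    hδt_neg (fun s _ => (hΦd x s).continuousAt.continuousWithinAt) (fun s _ => hΦd x s)
  have hΦδ : Φ x δt = δt * g x ξ := by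
    rw [hΦ0] at hξ
    have hne : (0:ℝ) - δt ≠ 0 := by linarith
    have h4 := (div_eq_iff hne).mp hξ.symm
    linear_combination -h4
  have hξa : |ξ| ≤ ε₀ := by
    rw [abs_le]
    exact ⟨by linarith [hξmem.1], by linarith [hξmem.2]⟩
  have hgξ := hε₀ x ξ hξa
  have hgx0 := hg0 x
  have h1 : 0 ≤ Θ * ρ x + g x ξ := by
    have h2 := (abs_le.mp hgξ).1
    have h3 : (Θ - μ) * m ≤ (Θ - μ) * ρ x :=
      mul_le_mul_of_nonneg_left (hmle x) (by linarith)
    rw [hgx0] at h2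
    rw [hηdef] at h2
    nlinarith
  have h5 : 0 ≤ (-δt) * (Θ * ρ x + g x ξ) := mul_nonneg (by linarith) h1
  rw [hΦδ]
  nlinarith
end
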